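/- arXiv:0804.0657 — 5 statements merged into one kernel-verified Lean document; each statement's English description precedes it below -/
import Mathlib

section
/- Let ℓ₂ and ℓ₄ be lines in ℝ² that are not perpendicular to each other. For each z₁ ∈ ℝ², let (z₂(z₁), z₄(z₁)) be the unique pair with z₂(z₁) ∈ ℓ₂, z₄(z₁) ∈ ℓ₄ and z₄(z₁) − z₁ equal to the clockwise rotation by π/2 of z₂(z₁) − z₁. Then the map F : ℝ² → ℝ² given by F(z₁) = z₂(z₁) + z₄(z₁) − z₁ (sending z₁ to the fourth vertex of the square determined by z₁, z₂(z₁), z₄(z₁)) is an affine map; in particular, the image under F of any line ℓ₁ ⊆ ℝ² is either a line or a single point. -/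
/-!
Write `z₂ = a₂ + t • d₂`, `z₄ = a₄ + s • d₄` and let `R` be the rotation. Pairing the square
condition `z₄ - z₁ = R (z₂ - z₁)` with `R d₄` eliminates `s`, because `R d₄ ⊥ d₄`, and, `R` being
an isometry, leaves `t * ⟪d₂, d₄⟫` equal to an affine function of `z₁`. Hence `t` is affine in
`z₁`, and so is the fourth vertex `z₂ + R (z₂ - z₁)`. An affine map `x ↦ L x + c` sends the line
`a + ℝ d` to the line `(L a + c) + ℝ (L d)`, which is a point exactly when `L d = 0`.
-/

open scoped RealInnerProductSpace

noncomputable section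

/-- The Euclidean plane. -/
abbrev Pt := EuclideanSpace ℝ (Fin 2)

/-- Counterclockwise rotation of a vector by `π/2`: `(x, y) ↦ (-y, x)`. -/
def rotCCW (w : Pt) : Pt := (WithLp.equiv 2 (Fin 2 → ℝ)).symm ![-w 1, w 0]

/-- Clockwise rotation of a vector by `π/2`: `(x, y) ↦ (y, -x)`. -/
def rotCW (w : Pt) : Pt := (WithLp.equiv 2 (Fin 2 → ℝ)).symm ![w 1, -w 0]

/-- The line through `a` with direction `d` (a one-dimensional affine subspace
when `d ≠ 0`). -/
def lineThrough (a d : Pt) : Set Pt := {p | ∃ t : ℝ, p = a + t • d}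

section SquareVertices

variable {V : Type*} [NormedAddCommGroup V] [InnerProductSpace ℝ V]

theorem mul_inner_eq_of_sub_eq_map_sub (R : V →ₗᵢ[ℝ] V) {a₂ d₂ a₄ d₄ z : V} {t s : ℝ}
    (hd₄ : ⟪d₄, R d₄⟫ = 0) (h : a₄ + s • d₄ - z = R (a₂ + t • d₂ - z)) :
    t * ⟪d₂, d₄⟫ = ⟪a₄ - z, R d₄⟫ - ⟪a₂ - z, d₄⟫ := by
  have h' := congrArg (⟪·, R d₄⟫) h
  simp only [add_sub_right_comm a₄, add_sub_right_comm a₂, map_add, map_smul, inner_add_left,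
    inner_smul_left, LinearIsometry.inner_map_map, hd₄, RCLike.conj_to_real] at h'
  linarith

theorem exists_linearMap_add_of_sub_eq_map_sub (R : V →ₗᵢ[ℝ] V) {a₂ d₂ a₄ d₄ : V}
    (hd₄ : ⟪d₄, R d₄⟫ = 0) (hnperp : ⟪d₂, d₄⟫ ≠ 0) {F : V → V}
    (hF : ∀ z, ∃ t s : ℝ, a₄ + s • d₄ - z = R (a₂ + t • d₂ - z) ∧
      F z = a₂ + t • d₂ + (a₄ + s • d₄) - z) :
    ∃ (L : V →ₗ[ℝ] V) (c : V), ∀ x, F x = L x + c := by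
  refine ⟨(innerₛₗ ℝ (d₄ - R d₄)).smulRight (⟪d₂, d₄⟫⁻¹ • (d₂ + R d₂)) - R.toLinearMap,
    F 0, fun x => ?_⟩
  obtain ⟨t, s, hx, hFx⟩ := hF x
  obtain ⟨t₀, s₀, h₀, hF₀⟩ := hF 0
  have ht : t = t₀ + (⟪d₄, x⟫ - ⟪R d₄, x⟫) / ⟪d₂, d₄⟫ := by
    have hx' := mul_inner_eq_of_sub_eq_map_sub R hd₄ hx
    have h₀' := mul_inner_eq_of_sub_eq_map_sub R hd₄ h₀
    simp only [inner_sub_left, sub_zero, real_inner_comm d₄ x, real_inner_comm (R d₄) x] at hx' h₀'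
    field_simp
    linarith
  rw [hFx, hF₀, add_sub_assoc (a₂ + t • d₂), hx, add_sub_assoc (a₂ + t₀ • d₂), h₀, ht]
  simp only [LinearMap.sub_apply, LinearMap.smulRight_apply, innerₛₗ_apply_apply,
    LinearIsometry.coe_toLinearMap, map_add, map_sub, map_smul, sub_zero]
  module

end SquareVertices

def rotCWₗᵢ : Pt →ₗᵢ[ℝ] Pt :=
  LinearMap.isometryOfInner
    { toFun := rotCW
      map_add' := fun x y => by ext i; fin_cases i <;> simp [rotCW, add_comm]
      map_smul' := fun r x => by ext i; fin_cases i <;> simp [rotCW] }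
    fun x y => by simp [rotCW, PiLp.inner_apply, Fin.sum_univ_two]; ring

theorem inner_self_rotCW (x : Pt) : ⟪x, rotCW x⟫ = 0 := by
  simp [rotCW, PiLp.inner_apply, Fin.sum_univ_two]; ring

theorem image_lineThrough (L : Pt →ₗ[ℝ] Pt) (c a d : Pt) :
    (fun x => L x + c) '' lineThrough a d = lineThrough (L a + c) (L d) := by
  ext p
  constructor
  · rintro ⟨_, ⟨t, rfl⟩, rfl⟩
    exact ⟨t, by simp only [map_add, map_smul]; abel⟩
  · rintro ⟨t, rfl⟩
    exact ⟨a + t • d, ⟨t, rfl⟩, by simp only [map_add, map_smul]; abel⟩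

theorem lineThrough_zero (a : Pt) : lineThrough a 0 = {a} := by
  simp [lineThrough]

theorem fourth_vertex_map_affine_general (a₂ d₂ a₄ d₄ : Pt)
    (hnperp : ⟪d₂, d₄⟫ ≠ 0) (F : Pt → Pt)
    (hF : ∀ z₁ : Pt, ∃ z₂ ∈ lineThrough a₂ d₂, ∃ z₄ ∈ lineThrough a₄ d₄,
      z₄ - z₁ = rotCW (z₂ - z₁) ∧ F z₁ = z₂ + z₄ - z₁) :
    (∃ (L : Pt →ₗ[ℝ] Pt) (c : Pt), ∀ x : Pt, F x = L x + c) ∧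
    ∀ a₁ d₁ : Pt, d₁ ≠ 0 →
      (∃ b e : Pt, e ≠ 0 ∧ F '' lineThrough a₁ d₁ = lineThrough b e) ∨
      (∃ p : Pt, F '' lineThrough a₁ d₁ = {p}) := by
  obtain ⟨L, c, hLc⟩ : ∃ (L : Pt →ₗ[ℝ] Pt) (c : Pt), ∀ x, F x = L x + c := by
    refine exists_linearMap_add_of_sub_eq_map_sub rotCWₗᵢ (a₂ := a₂) (a₄ := a₄)
      (inner_self_rotCW d₄) hnperp fun z => ?_
    obtain ⟨_, ⟨t, rfl⟩, _, ⟨s, rfl⟩, h⟩ := hF z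
    exact ⟨t, s, h⟩
  refine ⟨⟨L, c, hLc⟩, fun a₁ d₁ _ => ?_⟩
  rw [show F = fun x => L x + c from funext hLc, image_lineThrough]
  by_cases hLd : L d₁ = 0
  · exact .inr ⟨_, by rw [hLd, lineThrough_zero]⟩
  · exact .inl ⟨_, _, hLd, rfl⟩

/-- Given two non-perpendicular lines `ℓ₂`, `ℓ₄`, the map sending `z₁` to the
fourth vertex `z₂ + z₄ - z₁` of the square determined by the unique pair
`(z₂, z₄) ∈ ℓ₂ × ℓ₄` with `z₄ - z₁` the clockwise `π/2`-rotation of `z₂ - z₁`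
is affine; in particular the image of any line is a line or a single point. -/
theorem fourth_vertex_map_affine (a₂ d₂ a₄ d₄ : Pt)
    (h₂ : d₂ ≠ 0) (h₄ : d₄ ≠ 0) (hnperp : ⟪d₂, d₄⟫ ≠ 0) (F : Pt → Pt)
    (hF : ∀ z₁ : Pt, ∃ z₂ ∈ lineThrough a₂ d₂, ∃ z₄ ∈ lineThrough a₄ d₄,
      z₄ - z₁ = rotCW (z₂ - z₁) ∧ F z₁ = z₂ + z₄ - z₁) :
    (∃ (L : Pt →ₗ[ℝ] Pt) (c : Pt), ∀ x : Pt, F x = L x + c) ∧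
    ∀ a₁ d₁ : Pt, d₁ ≠ 0 →
      (∃ b e : Pt, e ≠ 0 ∧ F '' lineThrough a₁ d₁ = lineThrough b e) ∨
      (∃ p : Pt, F '' lineThrough a₁ d₁ = {p}) :=
  fourth_vertex_map_affine_general a₂ d₂ a₄ d₄ hnperp F hF
end
end

section
/- Let T ⊂ ℝ² be the boundary of a triangle with vertices p, q, r such that the angle at p is a right angle (i.e., ⟪q − p, r − p⟫ = 0 and p, q, r are not collinear). Then there are exactly two four-element subsets of T that are the vertex sets of a square; that is, T has exactly two inscribed squares. -/
open scoped RealInnerProductSpace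

noncomputable section

/-- Four distinct points of `P` forming the vertices of a (nondegenerate) square:
`a₂ - a₁ = a₃ - a₄` and `a₃ - a₂` is the rotation of `a₂ - a₁` by `π/2`. -/
def InscribedSquare (P : Set Pt) (a₁ a₂ a₃ a₄ : Pt) : Prop :=
  a₁ ∈ P ∧ a₂ ∈ P ∧ a₃ ∈ P ∧ a₄ ∈ P ∧
  a₂ - a₁ = a₃ - a₄ ∧ a₃ - a₂ = rotCCW (a₂ - a₁) ∧
  a₁ ≠ a₂ ∧ a₁ ≠ a₃ ∧ a₁ ≠ a₄ ∧ a₂ ≠ a₃ ∧ a₂ ≠ a₄ ∧ a₃ ≠ a₄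

/-!
After exchanging `q` and `r` if necessary, an orientation-preserving similarity moves the right
angle to the origin and the legs onto the axes, with lengths `1` and `b > 0`; such a map carries
inscribed squares to inscribed squares. Four vertices on three sides put two of them on one side.
They cannot be opposite vertices: the triangle lies in a half-plane bounded by the line of that
side, and the other two vertices, whose midpoint is on the line, would then lie on it as well.
Two adjacent vertices on a side determine the square: on a leg it is the square in the corner at
the right angle, on the hypotenuse it is the square standing on the hypotenuse. These two squares
are distinct.
-/

open Set Function

@[simp] lemma rotCCW_apply_zero (w : Pt) : rotCCW w 0 = -w 1 := rfl

@[simp] lemma rotCCW_apply_one (w : Pt) : rotCCW w 1 = w 0 := rfl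

lemma Pt.ext_coords {z w : Pt} (h₀ : z 0 = w 0) (h₁ : z 1 = w 1) : z = w := by
  ext i; fin_cases i <;> assumption

lemma inner_eq_coords (x y : Pt) : ⟪x, y⟫ = x 0 * y 0 + x 1 * y 1 := by
  simp only [PiLp.inner_apply, Fin.sum_univ_two, RCLike.inner_apply, conj_trivial]; ring

lemma mem_segment_iff_coords {x y z : Pt} :
    z ∈ segment ℝ x y ↔
      ∃ θ ∈ Icc (0 : ℝ) 1, z 0 = x 0 + θ * (y 0 - x 0) ∧ z 1 = x 1 + θ * (y 1 - x 1) := by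
  rw [segment_eq_image']
  constructor
  · rintro ⟨θ, hθ, rfl⟩
    exact ⟨θ, hθ, by simp, by simp⟩
  · rintro ⟨θ, hθ, h₀, h₁⟩
    exact ⟨θ, hθ, Pt.ext_coords (by simp [h₀]) (by simp [h₁])⟩

lemma rotCCW_add (v w : Pt) : rotCCW (v + w) = rotCCW v + rotCCW w :=
  Pt.ext_coords (by simp; ring) (by simp)

lemma rotCCW_smul (c : ℝ) (v : Pt) : rotCCW (c • v) = c • rotCCW v :=
  Pt.ext_coords (by simp) (by simp)

lemma rotCCW_rotCCW (v : Pt) : rotCCW (rotCCW v) = -v :=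
  Pt.ext_coords (by simp) (by simp)

lemma smul_add_smul_rotCCW_eq_zero {u : Pt} (hu : u ≠ 0) {x y : ℝ}
    (h : x • u + y • rotCCW u = 0) : x = 0 ∧ y = 0 := by
  have h₀ : x * u 0 - y * u 1 = 0 := by simpa [sub_eq_add_neg] using congrArg (· 0) h
  have h₁ : x * u 1 + y * u 0 = 0 := by simpa [add_comm] using congrArg (· 1) h
  have hN : u 0 * u 0 + u 1 * u 1 ≠ 0 := by rwa [← inner_eq_coords, inner_self_ne_zero]
  refine ⟨?_, ?_⟩
  · exact (mul_eq_zero.1 (by linear_combination u 0 * h₀ + u 1 * h₁ :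
      x * (u 0 * u 0 + u 1 * u 1) = 0)).resolve_right hN
  · exact (mul_eq_zero.1 (by linear_combination u 0 * h₁ - u 1 * h₀ :
      y * (u 0 * u 0 + u 1 * u 1) = 0)).resolve_right hN

lemma eq_zero_of_inner_eq_zero_of_inner_rotCCW_eq_zero {n d : Pt} (hd : d ≠ 0)
    (h : ⟪n, d⟫ = 0) (h' : ⟪n, rotCCW d⟫ = 0) : n = 0 := by
  rw [inner_eq_coords] at h h'
  simp only [rotCCW_apply_zero, rotCCW_apply_one] at h'
  have hN : d 0 * d 0 + d 1 * d 1 ≠ 0 := by rwa [← inner_eq_coords, inner_self_ne_zero]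
  refine Pt.ext_coords ?_ ?_
  · exact (mul_eq_zero.1 (by linear_combination d 0 * h - d 1 * h' :
      n 0 * (d 0 * d 0 + d 1 * d 1) = 0)).resolve_right hN
  · exact (mul_eq_zero.1 (by linear_combination d 1 * h + d 0 * h' :
      n 1 * (d 0 * d 0 + d 1 * d 1) = 0)).resolve_right hN

lemma exists_eq_smul_rotCCW_of_inner_eq_zero {u w : Pt} (hu : u ≠ 0) (h : ⟪u, w⟫ = 0) :
    ∃ t : ℝ, w = t • rotCCW u := by
  rw [inner_eq_coords] at h
  have hN : u 0 * u 0 + u 1 * u 1 ≠ 0 := by rwa [← inner_eq_coords, inner_self_ne_zero]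
  refine ⟨(u 0 * w 1 - u 1 * w 0) / (u 0 * u 0 + u 1 * u 1), Pt.ext_coords ?_ ?_⟩
  · rw [PiLp.smul_apply, smul_eq_mul, rotCCW_apply_zero, div_mul_eq_mul_div, eq_div_iff hN]
    linear_combination u 0 * h
  · rw [PiLp.smul_apply, smul_eq_mul, rotCCW_apply_one, div_mul_eq_mul_div, eq_div_iff hN]
    linear_combination u 1 * h

lemma insert_rotate {α : Type*} (a b c d : α) : ({b, c, d, a} : Set α) = {a, b, c, d} := by
  ext; simp only [mem_insert_iff, mem_singleton_iff]; tauto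

def inscribedSquareSets (P : Set Pt) : Set (Set Pt) :=
  {s | ∃ a₁ a₂ a₃ a₄ : Pt, InscribedSquare P a₁ a₂ a₃ a₄ ∧ s = {a₁, a₂, a₃, a₄}}

def squareVertices (v d : Pt) : Set Pt := {v, v + d, v + d + rotCCW d, v + rotCCW d}

section InscribedSquare

variable {P : Set Pt} {a₁ a₂ a₃ a₄ : Pt}

lemma InscribedSquare.rotate (h : InscribedSquare P a₁ a₂ a₃ a₄) :
    InscribedSquare P a₂ a₃ a₄ a₁ := by
  obtain ⟨m₁, m₂, m₃, m₄, hpar, hrot, h₁₂, h₁₃, h₁₄, h₂₃, h₂₄, h₃₄⟩ := h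
  refine ⟨m₂, m₃, m₄, m₁, by linear_combination (norm := module) -hpar, ?_,
    h₂₃, h₂₄, h₁₂.symm, h₃₄, h₁₃.symm, h₁₄.symm⟩
  rw [hrot, rotCCW_rotCCW]
  linear_combination (norm := module) hpar

lemma InscribedSquare.vertexSet_eq (h : InscribedSquare P a₁ a₂ a₃ a₄) :
    ({a₁, a₂, a₃, a₄} : Set Pt) = squareVertices a₁ (a₂ - a₁) := by
  obtain ⟨-, -, -, -, hpar, hrot, -⟩ := h
  rw [squareVertices, ← hrot, add_sub_cancel, add_sub_cancel,
    show a₁ + (a₃ - a₂) = a₄ by linear_combination (norm := module) -hpar]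

lemma InscribedSquare.coords_eq (h : InscribedSquare P a₁ a₂ a₃ a₄) :
    a₃ 0 = a₂ 0 - (a₂ 1 - a₁ 1) ∧ a₃ 1 = a₂ 1 + (a₂ 0 - a₁ 0) ∧
      a₄ 0 = a₁ 0 - (a₂ 1 - a₁ 1) ∧ a₄ 1 = a₁ 1 + (a₂ 0 - a₁ 0) := by
  obtain ⟨-, -, -, -, hpar, hrot, -⟩ := h
  have hpar₀ := congrArg (· 0) hpar
  have hpar₁ := congrArg (· 1) hpar
  have hrot₀ := congrArg (· 0) hrot
  have hrot₁ := congrArg (· 1) hrot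
  simp only [PiLp.sub_apply, rotCCW_apply_zero, rotCCW_apply_one] at hpar₀ hpar₁ hrot₀ hrot₁
  refine ⟨?_, ?_, ?_, ?_⟩ <;> linarith

lemma InscribedSquare.not_opposite_on_supportLine (h : InscribedSquare P a₁ a₂ a₃ a₄)
    {n : Pt} (hn : n ≠ 0) {c : ℝ} (hP : ∀ z ∈ P, ⟪n, z⟫ ≤ c) :
    ¬(⟪n, a₁⟫ = c ∧ ⟪n, a₃⟫ = c) := by
  rintro ⟨h₁, h₃⟩
  obtain ⟨-, m₂, -, m₄, hpar, hrot, h₁₂, -⟩ := h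
  have hdiag : ⟪n, a₂⟫ + ⟪n, a₄⟫ = ⟪n, a₁⟫ + ⟪n, a₃⟫ := by
    rw [← inner_add_right, ← inner_add_right]
    congr 1
    linear_combination (norm := module) hpar
  have h₂ : ⟪n, a₂⟫ = c := by linarith [hP _ m₂, hP _ m₄]
  refine hn (eq_zero_of_inner_eq_zero_of_inner_rotCCW_eq_zero (sub_ne_zero.2 h₁₂.symm) ?_ ?_)
  · rw [inner_sub_right, h₁, h₂, sub_self]
  · rw [← hrot, inner_sub_right, h₂, h₃, sub_self]

lemma inscribedSquare_squareVertices {v d : Pt} (hd : d ≠ 0) (h₁ : v ∈ P) (h₂ : v + d ∈ P)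
    (h₃ : v + d + rotCCW d ∈ P) (h₄ : v + rotCCW d ∈ P) :
    InscribedSquare P v (v + d) (v + d + rotCCW d) (v + rotCCW d) := by
  have hind : ∀ x y : ℝ, x • d + y • rotCCW d = 0 → x = 0 ∧ y = 0 :=
    fun x y => smul_add_smul_rotCCW_eq_zero hd
  refine ⟨h₁, h₂, h₃, h₄, by abel, by rw [add_sub_cancel_left, add_sub_cancel_left],
    ?_, ?_, ?_, ?_, ?_, ?_⟩ <;> intro he
  · exact one_ne_zero (hind 1 0 (by linear_combination (norm := module) -he)).1
  · exact one_ne_zero (hind 1 1 (by linear_combination (norm := module) -he)).1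
  · exact one_ne_zero (hind 0 1 (by linear_combination (norm := module) -he)).2
  · exact one_ne_zero (hind 0 1 (by linear_combination (norm := module) -he)).2
  · exact one_ne_zero (hind 1 (-1) (by linear_combination (norm := module) he)).1
  · exact one_ne_zero (hind 1 0 (by linear_combination (norm := module) he)).1

end InscribedSquare

def triangleBoundary (p q r : Pt) : Set Pt := segment ℝ p q ∪ segment ℝ q r ∪ segment ℝ r p

lemma triangleBoundary_swap (p q r : Pt) : triangleBoundary p r q = triangleBoundary p q r := by
  simp only [triangleBoundary, segment_symm ℝ r q, segment_symm ℝ p r, segment_symm ℝ q p]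
  ext; simp only [mem_union]; tauto

lemma image_triangleBoundary (f : Pt →ᵃ[ℝ] Pt) (p q r : Pt) :
    f '' triangleBoundary p q r = triangleBoundary (f p) (f q) (f r) := by
  simp only [triangleBoundary, image_union, image_segment]

section Similarity

variable {f : Pt →ᵃ[ℝ] Pt} (hf : Injective f)
  (hrot : ∀ v, f.linear (rotCCW v) = rotCCW (f.linear v))
include hf hrot

lemma inscribedSquare_image_iff {P : Set Pt} {a₁ a₂ a₃ a₄ : Pt} :
    InscribedSquare (f '' P) (f a₁) (f a₂) (f a₃) (f a₄) ↔ InscribedSquare P a₁ a₂ a₃ a₄ := by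
  have hsub : ∀ x y, f x - f y = f.linear (x - y) := fun x y => (f.linearMap_vsub x y).symm
  simp only [InscribedSquare, hf.mem_set_image, hf.ne_iff, hsub, ← hrot,
    (f.linear_injective_iff.2 hf).eq_iff]

lemma inscribedSquareSets_image (P : Set Pt) :
    inscribedSquareSets (f '' P) = image f '' inscribedSquareSets P := by
  ext s
  constructor
  · rintro ⟨_, _, _, _, h, rfl⟩
    obtain ⟨⟨a₁, -, rfl⟩, ⟨a₂, -, rfl⟩, ⟨a₃, -, rfl⟩, ⟨a₄, -, rfl⟩, -⟩ := id h
    exact ⟨_, ⟨a₁, a₂, a₃, a₄, (inscribedSquare_image_iff hf hrot).1 h, rfl⟩,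
      by simp only [image_insert_eq, image_singleton]⟩
  · rintro ⟨_, ⟨a₁, a₂, a₃, a₄, h, rfl⟩, rfl⟩
    exact ⟨f a₁, f a₂, f a₃, f a₄, (inscribedSquare_image_iff hf hrot).2 h,
      by simp only [image_insert_eq, image_singleton]⟩

lemma encard_inscribedSquareSets_image (P : Set Pt) :
    (inscribedSquareSets (f '' P)).encard = (inscribedSquareSets P).encard := by
  rw [inscribedSquareSets_image hf hrot, (image_injective.2 hf).encard_image]

end Similarity

def similarity (p u : Pt) : Pt →ᵃ[ℝ] Pt where
  toFun z := p + z 0 • u + z 1 • rotCCW u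
  linear :=
    { toFun := fun z => z 0 • u + z 1 • rotCCW u
      map_add' := fun z w => by simp only [PiLp.add_apply]; module
      map_smul' := fun c z => by
        simp only [PiLp.smul_apply, smul_eq_mul, RingHom.id_apply]; module }
  map_vadd' z w := by
    simp only [vadd_eq_add, PiLp.add_apply, LinearMap.coe_mk, AddHom.coe_mk]; module

lemma similarity_linear_apply (p u z : Pt) :
    (similarity p u).linear z = z 0 • u + z 1 • rotCCW u := rfl

lemma similarity_injective {u : Pt} (hu : u ≠ 0) (p : Pt) : Injective (similarity p u) := by
  refine (similarity p u).linear_injective_iff.1 fun z w hzw => ?_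
  have h := smul_add_smul_rotCCW_eq_zero hu (x := z 0 - w 0) (y := z 1 - w 1) (by
    rw [similarity_linear_apply, similarity_linear_apply] at hzw
    linear_combination (norm := module) hzw)
  exact Pt.ext_coords (sub_eq_zero.1 h.1) (sub_eq_zero.1 h.2)

lemma similarity_linear_rotCCW (p u v : Pt) :
    (similarity p u).linear (rotCCW v) = rotCCW ((similarity p u).linear v) := by
  simp only [similarity_linear_apply, rotCCW_add, rotCCW_smul, rotCCW_rotCCW, rotCCW_apply_zero,
    rotCCW_apply_one]
  module

section RightTriangle

variable {b : ℝ} {a₁ a₂ a₃ a₄ : Pt}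

def rightTriangleBoundary (b : ℝ) : Set Pt := triangleBoundary 0 !₂[1, 0] !₂[0, b]

lemma mem_rightTriangleBoundary (hb : 0 < b) {z : Pt} :
    z ∈ rightTriangleBoundary b ↔
      (z 1 = 0 ∧ 0 ≤ z 0 ∧ z 0 ≤ 1) ∨ (b * z 0 + z 1 = b ∧ 0 ≤ z 0 ∧ z 0 ≤ 1) ∨
        (z 0 = 0 ∧ 0 ≤ z 1 ∧ z 1 ≤ b) := by
  rw [rightTriangleBoundary, triangleBoundary, mem_union, mem_union, or_assoc]
  refine or_congr ?_ (or_congr ?_ ?_) <;> rw [mem_segment_iff_coords] <;> simp only [mem_Icc,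
    PiLp.zero_apply, Matrix.cons_val_zero, Matrix.cons_val_one, sub_zero, zero_sub,
    mul_zero, mul_one, add_zero, zero_add]
  · constructor
    · rintro ⟨θ, ⟨h₀, h₁⟩, rfl, e⟩
      exact ⟨e, h₀, h₁⟩
    · rintro ⟨e, h₀, h₁⟩
      exact ⟨z 0, ⟨h₀, h₁⟩, rfl, e⟩
  · constructor
    · rintro ⟨θ, ⟨h₀, h₁⟩, e₀, e₁⟩
      exact ⟨by rw [e₀, e₁]; ring, by linarith, by linarith⟩
    · rintro ⟨e, h₀, h₁⟩
      exact ⟨1 - z 0, ⟨by linarith, by linarith⟩, by ring, by linear_combination e⟩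
  · constructor
    · rintro ⟨θ, ⟨h₀, h₁⟩, e₀, e₁⟩
      exact ⟨e₀, by nlinarith, by nlinarith⟩
    · rintro ⟨e, h₀, h₁⟩
      refine ⟨1 - z 1 / b, ⟨?_, ?_⟩, e, by field_simp; ring⟩
      · rw [sub_nonneg, div_le_one hb]; exact h₁
      · linarith [div_nonneg h₀ hb.le]

lemma rightTriangleBoundary_bounds (hb : 0 < b) {z : Pt} (hz : z ∈ rightTriangleBoundary b) :
    0 ≤ z 0 ∧ 0 ≤ z 1 ∧ b * z 0 + z 1 ≤ b := by
  rcases (mem_rightTriangleBoundary hb).1 hz with ⟨e, h₀, h₁⟩ | ⟨e, h₀, h₁⟩ | ⟨e, h₀, h₁⟩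
  · exact ⟨h₀, e.ge, by nlinarith⟩
  · exact ⟨h₀, by nlinarith, e.le⟩
  · exact ⟨e.ge, h₀, by nlinarith⟩

/-- The triangle bounded by `rightTriangleBoundary b` is the intersection of the half-planes
`⟪sideNormal b k, z⟫ ≤ sideOffset b k`, and its `k`-th side lies on the line of equality. -/
def sideNormal (b : ℝ) : Fin 3 → Pt := ![!₂[0, -1], !₂[b, 1], !₂[-1, 0]]

def sideOffset (b : ℝ) : Fin 3 → ℝ := ![0, b, 0]

lemma sideNormal_ne_zero (b : ℝ) (k : Fin 3) : sideNormal b k ≠ 0 := by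
  intro h
  have h₀ := congrArg (· 0) h
  have h₁ := congrArg (· 1) h
  fin_cases k <;> simp [sideNormal] at h₀ h₁

lemma inner_sideNormal_le (hb : 0 < b) {z : Pt} (hz : z ∈ rightTriangleBoundary b) (k : Fin 3) :
    ⟪sideNormal b k, z⟫ ≤ sideOffset b k := by
  obtain ⟨h₀, h₁, h₂⟩ := rightTriangleBoundary_bounds hb hz
  fin_cases k <;> simp [sideNormal, sideOffset, inner_eq_coords] <;> linarith

lemma exists_inner_sideNormal_eq (hb : 0 < b) {z : Pt} (hz : z ∈ rightTriangleBoundary b) :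
    ∃ k, ⟪sideNormal b k, z⟫ = sideOffset b k := by
  rcases (mem_rightTriangleBoundary hb).1 hz with ⟨e, -⟩ | ⟨e, -⟩ | ⟨e, -⟩
  · exact ⟨0, by simp [sideNormal, sideOffset, inner_eq_coords, e]⟩
  · exact ⟨1, by simp [sideNormal, sideOffset, inner_eq_coords, e]⟩
  · exact ⟨2, by simp [sideNormal, sideOffset, inner_eq_coords, e]⟩

def cornerSquare (b : ℝ) : Set Pt := squareVertices 0 !₂[b / (1 + b), 0]

def hypotenuseSquare (b : ℝ) : Set Pt :=
  let t := b / (1 + b + b ^ 2)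
  squareVertices !₂[(1 + b) * t, t] !₂[-t, b * t]

lemma InscribedSquare.vertexSet_eq_cornerSquare_of_base (hb : 0 < b)
    (h : InscribedSquare (rightTriangleBoundary b) a₁ a₂ a₃ a₄) (h₁ : a₁ 1 = 0) (h₂ : a₂ 1 = 0) :
    {a₁, a₂, a₃, a₄} = cornerSquare b := by
  obtain ⟨e₃₀, e₃₁, e₄₀, e₄₁⟩ := h.coords_eq
  rw [h.vertexSet_eq, cornerSquare]
  obtain ⟨m₁, -, m₃, m₄, -, -, h₁₂, -⟩ := h
  have hne : a₂ 0 - a₁ 0 ≠ 0 := fun he => h₁₂ (Pt.ext_coords (by linarith) (by linarith))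
  have hpos : 0 < a₂ 0 - a₁ 0 :=
    lt_of_le_of_ne (by linarith [rightTriangleBoundary_bounds hb m₄]) hne.symm
  have hx₁ := (rightTriangleBoundary_bounds hb m₁).1
  -- `a₃` and `a₄` lie above the base, and `a₃` lies to the right of `a₄` at the same height.
  obtain ⟨hhyp₃, hleg₄⟩ : b * a₃ 0 + a₃ 1 = b ∧ a₄ 0 = 0 := by
    rcases (mem_rightTriangleBoundary hb).1 m₃ with ⟨l₃, -⟩ | ⟨l₃, -⟩ | ⟨l₃, -⟩ <;>
    rcases (mem_rightTriangleBoundary hb).1 m₄ with ⟨l₄, -⟩ | ⟨l₄, -⟩ | ⟨l₄, -⟩ <;>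
    first | exact ⟨l₃, l₄⟩ | (exfalso; nlinarith)
  have hx₁ : a₁ 0 = 0 := by linarith
  have hside : a₂ 0 - a₁ 0 = b / (1 + b) := by
    rw [eq_div_iff (by positivity)]
    linear_combination hhyp₃ - b * e₃₀ - e₃₁ - b * hx₁ + b * h₂ - b * h₁ - h₂
  congr 1
  · exact Pt.ext_coords (by simp only [PiLp.zero_apply]; linarith) (by simp [h₁])
  · exact Pt.ext_coords (by simp [hside]) (by simp [h₁, h₂])

lemma InscribedSquare.vertexSet_eq_cornerSquare_of_leg (hb : 0 < b)
    (h : InscribedSquare (rightTriangleBoundary b) a₁ a₂ a₃ a₄) (h₁ : a₁ 0 = 0) (h₂ : a₂ 0 = 0) :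
    {a₁, a₂, a₃, a₄} = cornerSquare b := by
  obtain ⟨e₃₀, e₃₁, e₄₀, e₄₁⟩ := h.coords_eq
  obtain ⟨m₁, m₂, m₃, m₄, -, -, h₁₂, -⟩ := id h
  have hne : a₂ 1 - a₁ 1 ≠ 0 := fun he => h₁₂ (Pt.ext_coords (by linarith) (by linarith))
  have hneg : a₂ 1 - a₁ 1 < 0 :=
    lt_of_le_of_ne (by linarith [rightTriangleBoundary_bounds hb m₄]) hne
  have hy₂ := (rightTriangleBoundary_bounds hb m₂).2.1
  have hbase₃ : a₃ 1 = 0 := by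
    rcases (mem_rightTriangleBoundary hb).1 m₃ with ⟨l₃, -⟩ | ⟨l₃, -⟩ | ⟨l₃, -⟩ <;>
    rcases (mem_rightTriangleBoundary hb).1 m₄ with ⟨l₄, -⟩ | ⟨l₄, -⟩ | ⟨l₄, -⟩ <;>
    first | exact l₃ | (exfalso; nlinarith)
  rw [← insert_rotate]
  exact h.rotate.vertexSet_eq_cornerSquare_of_base hb (by linarith) hbase₃

lemma InscribedSquare.vertexSet_eq_hypotenuseSquare_of_hypotenuse (hb : 0 < b)
    (h : InscribedSquare (rightTriangleBoundary b) a₁ a₂ a₃ a₄)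
    (h₁ : b * a₁ 0 + a₁ 1 = b) (h₂ : b * a₂ 0 + a₂ 1 = b) :
    {a₁, a₂, a₃, a₄} = hypotenuseSquare b := by
  obtain ⟨e₃₀, e₃₁, e₄₀, e₄₁⟩ := h.coords_eq
  rw [h.vertexSet_eq, hypotenuseSquare]
  obtain ⟨-, m₂, m₃, m₄, -, -, h₁₂, -⟩ := h
  have hline₃ : b * a₃ 0 + a₃ 1 = b + (1 + b ^ 2) * (a₂ 0 - a₁ 0) := by
    linear_combination h₂ + b * e₃₀ + e₃₁ - b * (h₂ - h₁)
  have hline₄ : b * a₄ 0 + a₄ 1 = b + (1 + b ^ 2) * (a₂ 0 - a₁ 0) := by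
    linear_combination h₁ + b * e₄₀ + e₄₁ - b * (h₂ - h₁)
  have hne : a₂ 0 - a₁ 0 ≠ 0 := fun he =>
    h₁₂ (Pt.ext_coords (by linarith) (by linear_combination h₁ - h₂ + b * he))
  have hneg : (1 + b ^ 2) * (a₂ 0 - a₁ 0) < 0 := by
    refine lt_of_le_of_ne (by linarith [rightTriangleBoundary_bounds hb m₄]) ?_
    exact mul_ne_zero (by positivity) hne
  have hbounds₃ := rightTriangleBoundary_bounds hb m₃
  have hbounds₄ := rightTriangleBoundary_bounds hb m₄
  -- `a₃`, `a₄` lie strictly below the hypotenuse, and `a₃ - a₄ = a₂ - a₁` points up and left.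
  obtain ⟨hleg₃, hbase₄⟩ : a₃ 0 = 0 ∧ a₄ 1 = 0 := by
    rcases (mem_rightTriangleBoundary hb).1 m₃ with ⟨l₃, -⟩ | ⟨l₃, -⟩ | ⟨l₃, -⟩ <;>
    rcases (mem_rightTriangleBoundary hb).1 m₄ with ⟨l₄, -⟩ | ⟨l₄, -⟩ | ⟨l₄, -⟩ <;>
    first | exact ⟨l₃, l₄⟩ | (exfalso; nlinarith)
  set t := b / (1 + b + b ^ 2) with ht
  have hside : a₂ 0 - a₁ 0 = -t := by
    rw [ht, ← neg_div, eq_div_iff (by positivity)]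
    linear_combination (-1 - b) * h₁ + b * h₂ + b * (hleg₃ - e₃₀) + (hbase₄ - e₄₁)
  congr 1
  · refine Pt.ext_coords ?_ ?_ <;> simp only [Matrix.cons_val_zero, Matrix.cons_val_one]
    · linear_combination (hleg₃ - e₃₀) + h₂ - h₁ - (1 + b) * hside
    · linear_combination (hbase₄ - e₄₁) - hside
  · refine Pt.ext_coords ?_ ?_ <;>
      simp only [PiLp.sub_apply, Matrix.cons_val_zero, Matrix.cons_val_one]
    · exact hside
    · linear_combination h₂ - h₁ - b * hside

lemma InscribedSquare.vertexSet_mem_of_adjacent (hb : 0 < b)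
    (h : InscribedSquare (rightTriangleBoundary b) a₁ a₂ a₃ a₄) {k : Fin 3}
    (h₁ : ⟪sideNormal b k, a₁⟫ = sideOffset b k) (h₂ : ⟪sideNormal b k, a₂⟫ = sideOffset b k) :
    {a₁, a₂, a₃, a₄} ∈ ({cornerSquare b, hypotenuseSquare b} : Set (Set Pt)) := by
  fin_cases k <;> simp only [sideNormal, sideOffset, inner_eq_coords, Fin.zero_eta, Fin.mk_one,
    Fin.reduceFinMk, Matrix.cons_val, Matrix.cons_val_zero, Matrix.cons_val_one,
    Matrix.cons_val_fin_one, zero_mul, one_mul, neg_mul, zero_add, add_zero, neg_eq_zero] at h₁ h₂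
  · exact Or.inl (h.vertexSet_eq_cornerSquare_of_base hb h₁ h₂)
  · exact Or.inr (h.vertexSet_eq_hypotenuseSquare_of_hypotenuse hb h₁ h₂)
  · exact Or.inl (h.vertexSet_eq_cornerSquare_of_leg hb h₁ h₂)

lemma InscribedSquare.vertexSet_mem (hb : 0 < b)
    (h : InscribedSquare (rightTriangleBoundary b) a₁ a₂ a₃ a₄) :
    {a₁, a₂, a₃, a₄} ∈ ({cornerSquare b, hypotenuseSquare b} : Set (Set Pt)) := by
  obtain ⟨m₁, m₂, m₃, m₄, -⟩ := id h
  obtain ⟨k₁, h₁⟩ := exists_inner_sideNormal_eq hb m₁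
  obtain ⟨k₂, h₂⟩ := exists_inner_sideNormal_eq hb m₂
  obtain ⟨k₃, h₃⟩ := exists_inner_sideNormal_eq hb m₃
  obtain ⟨k₄, h₄⟩ := exists_inner_sideNormal_eq hb m₄
  have opposite {a₁ a₂ a₃ a₄ : Pt} (h : InscribedSquare (rightTriangleBoundary b) a₁ a₂ a₃ a₄)
      (k : Fin 3) :=
    h.not_opposite_on_supportLine (sideNormal_ne_zero b k) fun _ hz => inner_sideNormal_le hb hz k
  have pigeonhole : ∀ i j k l : Fin 3, i = j ∨ j = k ∨ k = l ∨ l = i ∨ i = k ∨ j = l := by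
    decide
  rcases pigeonhole k₁ k₂ k₃ k₄ with rfl | rfl | rfl | rfl | rfl | rfl
  · exact h.vertexSet_mem_of_adjacent hb h₁ h₂
  · rw [← insert_rotate]
    exact h.rotate.vertexSet_mem_of_adjacent hb h₂ h₃
  · rw [← insert_rotate, ← insert_rotate]
    exact h.rotate.rotate.vertexSet_mem_of_adjacent hb h₃ h₄
  · rw [← insert_rotate, ← insert_rotate, ← insert_rotate]
    exact h.rotate.rotate.rotate.vertexSet_mem_of_adjacent hb h₄ h₁
  · exact absurd ⟨h₁, h₃⟩ (opposite h k₁)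
  · exact absurd ⟨h₂, h₄⟩ (opposite h.rotate k₂)

lemma cornerSquare_mem_inscribedSquareSets (hb : 0 < b) :
    cornerSquare b ∈ inscribedSquareSets (rightTriangleBoundary b) := by
  rw [cornerSquare]
  have hm₀ : 0 < b / (1 + b) := by positivity
  have hmb : b * (b / (1 + b)) + b / (1 + b) = b := by field_simp; ring
  generalize b / (1 + b) = m at hm₀ hmb ⊢
  have hm₁ : m ≤ 1 := by nlinarith
  have hm₂ : m ≤ b := by nlinarith
  refine ⟨_, _, _, _, inscribedSquare_squareVertices ?_ ((mem_rightTriangleBoundary hb).2 ?_)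
    ((mem_rightTriangleBoundary hb).2 ?_) ((mem_rightTriangleBoundary hb).2 ?_)
    ((mem_rightTriangleBoundary hb).2 ?_), rfl⟩
  · intro h; simpa [hm₀.ne'] using congrArg (· 0) h
  · refine Or.inl ⟨?_, ?_, ?_⟩ <;> simp
  · refine Or.inl ⟨?_, ?_, ?_⟩ <;> simp <;> nlinarith
  · refine Or.inr (Or.inl ⟨?_, ?_, ?_⟩) <;> simp <;> nlinarith
  · refine Or.inr (Or.inr ⟨?_, ?_, ?_⟩) <;> simp <;> nlinarith

lemma hypotenuseSquare_mem_inscribedSquareSets (hb : 0 < b) :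
    hypotenuseSquare b ∈ inscribedSquareSets (rightTriangleBoundary b) := by
  rw [hypotenuseSquare]
  have ht₀ : 0 < b / (1 + b + b ^ 2) := by positivity
  have htb : (1 + b + b ^ 2) * (b / (1 + b + b ^ 2)) = b := by field_simp
  generalize b / (1 + b + b ^ 2) = t at ht₀ htb ⊢
  have ht₁ : (1 + b) * t ≤ 1 := by nlinarith
  have ht₂ : b * t ≤ b := by nlinarith
  refine ⟨_, _, _, _, inscribedSquare_squareVertices ?_ ((mem_rightTriangleBoundary hb).2 ?_)
    ((mem_rightTriangleBoundary hb).2 ?_) ((mem_rightTriangleBoundary hb).2 ?_)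
    ((mem_rightTriangleBoundary hb).2 ?_), rfl⟩
  · intro h; simpa [ht₀.ne'] using congrArg (· 0) h
  · refine Or.inr (Or.inl ⟨?_, ?_, ?_⟩) <;> simp <;> nlinarith
  · refine Or.inr (Or.inl ⟨?_, ?_, ?_⟩) <;> simp <;> nlinarith
  · refine Or.inr (Or.inr ⟨?_, ?_, ?_⟩) <;> simp <;> nlinarith
  · refine Or.inl ⟨?_, ?_, ?_⟩ <;> simp <;> nlinarith

lemma cornerSquare_ne_hypotenuseSquare (hb : 0 < b) : cornerSquare b ≠ hypotenuseSquare b := by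
  intro h
  have h0 : (0 : Pt) ∈ hypotenuseSquare b := h ▸ mem_insert _ _
  rw [hypotenuseSquare] at h0
  have ht₀ : 0 < b / (1 + b + b ^ 2) := by positivity
  generalize b / (1 + b + b ^ 2) = t at ht₀ h0
  simp only [squareVertices, mem_insert_iff, mem_singleton_iff] at h0
  rcases h0 with h0 | h0 | h0 | h0 <;> have := congrArg (fun z : Pt => z 0 + z 1) h0 <;>
    simp at this <;> nlinarith

theorem inscribedSquareSets_rightTriangleBoundary (hb : 0 < b) :
    inscribedSquareSets (rightTriangleBoundary b) = {cornerSquare b, hypotenuseSquare b} := by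
  refine Subset.antisymm ?_ (insert_subset_iff.2 ⟨cornerSquare_mem_inscribedSquareSets hb,
    singleton_subset_iff.2 (hypotenuseSquare_mem_inscribedSquareSets hb)⟩)
  rintro _ ⟨a₁, a₂, a₃, a₄, h, rfl⟩
  exact h.vertexSet_mem hb

end RightTriangle

theorem encard_inscribedSquareSets_triangleBoundary {p q r : Pt} (hq : q ≠ p) {t : ℝ} (ht : 0 < t)
    (hr : r - p = t • rotCCW (q - p)) :
    (inscribedSquareSets (triangleBoundary p q r)).encard = 2 := by
  have himage : similarity p (q - p) '' rightTriangleBoundary t = triangleBoundary p q r := by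
    rw [rightTriangleBoundary, image_triangleBoundary]
    congr 1 <;> simp [similarity, ← hr]
  rw [← himage, encard_inscribedSquareSets_image (similarity_injective (sub_ne_zero.2 hq) p)
    (similarity_linear_rotCCW p (q - p)), inscribedSquareSets_rightTriangleBoundary ht,
    encard_pair (cornerSquare_ne_hypotenuseSquare ht)]

/-- The boundary of a right triangle has exactly two inscribed squares, counted
as unordered four-element vertex sets. -/
theorem right_triangle_two_inscribed_squares (p q r : Pt)
    (hncol : ¬ Collinear ℝ ({p, q, r} : Set Pt)) (hright : ⟪q - p, r - p⟫ = 0) :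
    {s : Set Pt | ∃ a₁ a₂ a₃ a₄ : Pt,
      InscribedSquare (segment ℝ p q ∪ segment ℝ q r ∪ segment ℝ r p) a₁ a₂ a₃ a₄ ∧
      s = {a₁, a₂, a₃, a₄}}.encard = 2 := by
  change (inscribedSquareSets (triangleBoundary p q r)).encard = 2
  have hq : q ≠ p := (ne₁₂_of_not_collinear hncol).symm
  have hr : r ≠ p := (ne₁₃_of_not_collinear hncol).symm
  obtain ⟨t, ht⟩ := exists_eq_smul_rotCCW_of_inner_eq_zero (sub_ne_zero.2 hq) hright
  have ht₀ : t ≠ 0 := by rintro rfl; exact hr (sub_eq_zero.1 (by simpa using ht))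
  rcases ht₀.lt_or_gt with hneg | hpos
  · rw [← triangleBoundary_swap]
    refine encard_inscribedSquareSets_triangleBoundary hr (t := -t⁻¹) (by simpa using hneg) ?_
    rw [ht, rotCCW_smul, rotCCW_rotCCW, smul_smul, neg_mul, inv_mul_cancel₀ ht₀, neg_one_smul,
      neg_neg]
  · exact encard_inscribedSquareSets_triangleBoundary hq hpos ht
end
end

section
/- Let P be a simple polygon in ℝ² all of whose interior angles lie strictly between π/2 and 3π/2. Then there exists ε > 0 such that there is no triple of distinct points y, z, u ∈ P with |z − y| < ε, |u − y| < ε, |z − y| = |u − y|, and ⟪z − y, u − y⟫ = 0. In other words, P has no inscribed right isosceles triangles of arbitrarily small size. -/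
open scoped RealInnerProductSpace

noncomputable section

/-- `v : ZMod n → Pt` (with `3 ≤ n`) is a simple polygon: consecutive vertices are
distinct, consecutive edges meet exactly in their common vertex, and
non-consecutive edges are disjoint. -/
def IsSimplePolygon {n : ℕ} (v : ZMod n → Pt) : Prop :=
  3 ≤ n ∧
  (∀ i, v i ≠ v (i + 1)) ∧
  (∀ i : ZMod n,
    segment ℝ (v i) (v (i + 1)) ∩ segment ℝ (v (i + 1)) (v (i + 2)) = {v (i + 1)}) ∧
  (∀ i j : ZMod n, i ≠ j → i ≠ j + 1 → j ≠ i + 1 →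
    segment ℝ (v i) (v (i + 1)) ∩ segment ℝ (v j) (v (j + 1)) = ∅)

/-- The polygon itself: the union of its edges. -/
def polygonSet {n : ℕ} (v : ZMod n → Pt) : Set Pt :=
  ⋃ i : ZMod n, segment ℝ (v i) (v (i + 1))

/-- All interior angles of the polygon lie strictly between `π/2` and `3π/2`:
at every vertex `vᵢ` the inner product `⟪vᵢ₋₁ - vᵢ, vᵢ₊₁ - vᵢ⟫` is negative. -/
def ObtuseAngles {n : ℕ} (v : ZMod n → Pt) : Prop :=
  ∀ i : ZMod n, ⟪v (i - 1) - v i, v (i + 1) - v i⟫ < 0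

/-!
Near each of its points the polygon coincides with a pair of half-lines from a common
point whose directions `a`, `b` satisfy `⟪a, b⟫ < 0`: the two edges at a vertex, or the two
halves of an edge. Such a pair carries no right angle `z y u` with `z, u ≠ y`: if `y` lies on
the half-line along `a`, every `x - y` is a multiple of `a` or a nonzero combination of `b`
and `-a` with nonnegative coefficients, and since `⟪b, -a⟫ > 0` no two such vectors are
orthogonal. A Lebesgue number of the resulting cover of the compact polygon is a uniform
radius below which no right angle is inscribed.
-/

open Set Metric

section BallInter

variable {X : Type*} [PseudoMetricSpace X]

theorem IsCompact.exists_pos_forall_ball_inter {K : Set X} (hK : IsCompact K)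
    {P : Set X → Prop} (hP : ∀ ⦃s t⦄, s ⊆ t → P t → P s)
    (hloc : ∀ p ∈ K, ∃ ε > 0, P (ball p ε ∩ K)) :
    ∃ δ > 0, ∀ y ∈ K, P (ball y δ ∩ K) := by
  choose ε hε hPε using hloc
  have hcover : K ⊆ ⋃ p : K, ball (p : X) (ε p p.2) :=
    fun x hx => mem_iUnion.mpr ⟨⟨x, hx⟩, mem_ball_self (hε x hx)⟩
  obtain ⟨δ, hδ, hsub⟩ := lebesgue_number_lemma_of_metric hK (fun _ => isOpen_ball) hcover
  refine ⟨δ, hδ, fun y hy => ?_⟩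
  obtain ⟨p, hp⟩ := hsub y hy
  exact hP (inter_subset_inter_left K hp) (hPε p p.2)

theorem exists_ball_inter_iUnion_subset_biUnion {ι : Type*} [Finite ι] {F : ι → Set X}
    (hF : ∀ i, IsClosed (F i)) {J : Set ι} {p : X} (hp : ∀ i ∉ J, p ∉ F i) :
    ∃ ε > 0, ball p ε ∩ ⋃ i, F i ⊆ ⋃ i ∈ J, F i := by
  have hclosed : IsClosed (⋃ i ∈ Jᶜ, F i) := (toFinite Jᶜ).isClosed_biUnion fun i _ => hF i
  have hpK : p ∉ ⋃ i ∈ Jᶜ, F i := by simpa using hp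
  obtain ⟨ε, hε, hball⟩ := isOpen_iff.mp hclosed.isOpen_compl p hpK
  refine ⟨ε, hε, fun x ⟨hxb, hx⟩ => ?_⟩
  obtain ⟨i, hi⟩ := mem_iUnion.mp hx
  by_cases hiJ : i ∈ J
  · exact mem_biUnion hiJ hi
  · exact absurd (mem_biUnion hiJ hi) (hball hxb)

end BallInter

section HalfLines

variable {E : Type*} [NormedAddCommGroup E] [InnerProductSpace ℝ E]

def halfLine (q a : E) : Set E := (fun t : ℝ => q + t • a) '' Ici 0

def HasNoRightAngle (S : Set E) : Prop :=
  ∀ y ∈ S, ∀ z ∈ S, ∀ u ∈ S, y ≠ z → y ≠ u → ⟪z - y, u - y⟫ ≠ 0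

theorem HasNoRightAngle.mono {S T : Set E} (hT : HasNoRightAngle T) (hST : S ⊆ T) :
    HasNoRightAngle S :=
  fun y hy z hz u hu => hT y (hST hy) z (hST hz) u (hST hu)

theorem isCompact_segment (x y : E) : IsCompact (segment ℝ x y) :=
  convexHull_pair (𝕜 := ℝ) x y ▸ (toFinite {x, y}).isCompact_convexHull ℝ

theorem segment_subset_halfLine (q x : E) : segment ℝ q x ⊆ halfLine q (x - q) := by
  rw [segment_eq_image']
  exact image_mono Icc_subset_Ici_self

theorem segment_subset_halfLine_union {x w p : E} (hp : p ∈ segment ℝ x w) :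
    segment ℝ x w ⊆ halfLine p (w - x) ∪ halfLine p (x - w) := by
  rw [segment_eq_image'] at hp ⊢
  obtain ⟨s, -, rfl⟩ := hp
  rintro _ ⟨t, -, rfl⟩
  rcases le_total s t with hst | hts
  · exact Or.inl ⟨t - s, sub_nonneg.mpr hst, by module⟩
  · exact Or.inr ⟨s - t, sub_nonneg.mpr hts, by module⟩

variable {a b : E}

theorem inner_smul_sub_smul_ne_zero (ha : a ≠ 0) {α β γ : ℝ} (hβ : β ≠ α) (hγ : γ ≠ α) :
    ⟪(β - α) • a, (γ - α) • a⟫ ≠ 0 := by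
  simp [real_inner_smul_left, real_inner_smul_right, sub_ne_zero, ha, hβ, hγ]

theorem inner_smul_sub_ne_zero (hab : ⟪a, b⟫ < 0) {α β γ : ℝ} (hα : 0 ≤ α) (hγ : 0 ≤ γ)
    (hβ : β ≠ α) (hαγ : α ≠ 0 ∨ γ ≠ 0) :
    ⟪(β - α) • a, γ • b - α • a⟫ ≠ 0 := by
  have ha : 0 < ⟪a, a⟫ := real_inner_self_pos.mpr fun h => by simp [h] at hab
  have h : ⟪(β - α) • a, γ • b - α • a⟫ = (β - α) * (γ * ⟪a, b⟫ - α * ⟪a, a⟫) := by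
    simp only [inner_sub_right, real_inner_smul_left, real_inner_smul_right]
    ring
  rw [h]
  refine mul_ne_zero (sub_ne_zero.mpr hβ) (ne_of_lt ?_)
  rcases hαγ with hα' | hγ'
  · nlinarith [hα.lt_of_ne' hα']
  · nlinarith [hγ.lt_of_ne' hγ']

theorem inner_sub_smul_sub_smul_pos (hab : ⟪a, b⟫ < 0) {α β γ : ℝ} (hα : 0 ≤ α)
    (hβ : 0 ≤ β) (hγ : 0 ≤ γ) (hαβ : α ≠ 0 ∨ β ≠ 0) (hαγ : α ≠ 0 ∨ γ ≠ 0) :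
    0 < ⟪β • b - α • a, γ • b - α • a⟫ := by
  have ha : 0 < ⟪a, a⟫ := real_inner_self_pos.mpr fun h => by simp [h] at hab
  have hb : 0 < ⟪b, b⟫ := real_inner_self_pos.mpr fun h => by simp [h] at hab
  have h : ⟪β • b - α • a, γ • b - α • a⟫ =
      β * γ * ⟪b, b⟫ + (β + γ) * α * -⟪a, b⟫ + α * α * ⟪a, a⟫ := by
    simp only [inner_sub_left, inner_sub_right, real_inner_smul_left, real_inner_smul_right,
      real_inner_comm a b]
    ring
  rw [h]
  rcases eq_or_lt_of_le hα with rfl | hα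
  · simp only [ne_eq, not_true_eq_false, false_or] at hαβ hαγ
    have := mul_pos (hβ.lt_of_ne' hαβ) (hγ.lt_of_ne' hαγ)
    nlinarith
  · have : 0 ≤ (β + γ) * α * -⟪a, b⟫ := by
      have := neg_pos.mpr hab
      positivity
    nlinarith [mul_pos hα hα, mul_nonneg (mul_nonneg hβ hγ) hb.le]

theorem inner_sub_ne_zero_of_mem_halfLine (hab : ⟪a, b⟫ < 0) {q y z u : E}
    (hy : y ∈ halfLine q a) (hz : z ∈ halfLine q a ∪ halfLine q b)
    (hu : u ∈ halfLine q a ∪ halfLine q b) (hyz : y ≠ z) (hyu : y ≠ u) :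
    ⟪z - y, u - y⟫ ≠ 0 := by
  have ha : a ≠ 0 := fun h => by simp [h] at hab
  obtain ⟨α, hα, rfl⟩ := hy
  have sub_a (s : ℝ) : q + s • a - (q + α • a) = (s - α) • a := by module
  have sub_b (s : ℝ) : q + s • b - (q + α • a) = s • b - α • a := by module
  have ne_a {s : ℝ} (h : q + α • a ≠ q + s • a) : s ≠ α := fun hs => h (by rw [hs])
  have ne_b {s : ℝ} (h : q + α • a ≠ q + s • b) : α ≠ 0 ∨ s ≠ 0 := by
    contrapose! h
    simp [h.1, h.2]
  rcases hz with ⟨β, hβ, rfl⟩ | ⟨β, hβ, rfl⟩ <;> rcases hu with ⟨γ, hγ, rfl⟩ | ⟨γ, hγ, rfl⟩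
    <;> simp only [sub_a, sub_b]
  · exact inner_smul_sub_smul_ne_zero ha (ne_a hyz) (ne_a hyu)
  · exact inner_smul_sub_ne_zero hab hα hγ (ne_a hyz) (ne_b hyu)
  · rw [real_inner_comm]
    exact inner_smul_sub_ne_zero hab hα hβ (ne_a hyu) (ne_b hyz)
  · exact (inner_sub_smul_sub_smul_pos hab hα hβ hγ (ne_b hyz) (ne_b hyu)).ne'

theorem hasNoRightAngle_halfLine_union (q : E) (hab : ⟪a, b⟫ < 0) :
    HasNoRightAngle (halfLine q a ∪ halfLine q b) := by
  rintro y (hy | hy) z hz u hu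
  · exact inner_sub_ne_zero_of_mem_halfLine hab hy hz hu
  · rw [union_comm] at hz hu
    exact inner_sub_ne_zero_of_mem_halfLine (real_inner_comm a b ▸ hab) hy hz hu

end HalfLines

namespace IsSimplePolygon

variable {n : ℕ} {v : ZMod n → Pt}

theorem neZero (hP : IsSimplePolygon v) : NeZero n := ⟨by have := hP.1; omega⟩

theorem isCompact_polygonSet (hP : IsSimplePolygon v) : IsCompact (polygonSet v) := by
  have := hP.neZero
  exact isCompact_iUnion fun i => isCompact_segment _ _

theorem eq_vertex_of_mem_edge_of_mem_edge (hP : IsSimplePolygon v) {p : Pt} {i k : ZMod n}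
    (hi : p ∈ segment ℝ (v i) (v (i + 1))) (hk : p ∈ segment ℝ (v k) (v (k + 1)))
    (hki : k ≠ i) : (k = i + 1 ∧ p = v (i + 1)) ∨ (i = k + 1 ∧ p = v i) := by
  obtain ⟨-, -, hcons, hdisj⟩ := hP
  by_cases hk1 : k = i + 1
  · subst hk1
    rw [add_assoc, one_add_one_eq_two] at hk
    refine Or.inl ⟨rfl, ?_⟩
    rw [← mem_singleton_iff, ← hcons i]
    exact mem_inter hi hk
  by_cases hi1 : i = k + 1
  · subst hi1
    rw [add_assoc, one_add_one_eq_two] at hi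
    refine Or.inr ⟨rfl, ?_⟩
    rw [← mem_singleton_iff, ← hcons k]
    exact mem_inter hk hi
  · exact absurd (hdisj i k hki.symm hi1 hk1 ▸ mem_inter hi hk) (notMem_empty p)

theorem vertex_notMem_edge (hP : IsSimplePolygon v) {j k : ZMod n} (hkj : k ≠ j)
    (hkj' : k ≠ j - 1) : v j ∉ segment ℝ (v k) (v (k + 1)) := fun h => by
  rcases hP.eq_vertex_of_mem_edge_of_mem_edge (left_mem_segment ℝ _ _) h hkj with
    ⟨-, h⟩ | ⟨h, -⟩
  · exact hP.2.1 j h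
  · exact hkj' (eq_sub_of_add_eq h.symm)

theorem exists_ball_inter_polygonSet_subset_of_vertex (hP : IsSimplePolygon v) (j : ZMod n) :
    ∃ ε > 0, ball (v j) ε ∩ polygonSet v ⊆
      halfLine (v j) (v (j - 1) - v j) ∪ halfLine (v j) (v (j + 1) - v j) := by
  have := hP.neZero
  obtain ⟨ε, hε, hsub⟩ := exists_ball_inter_iUnion_subset_biUnion
    (F := fun k => segment ℝ (v k) (v (k + 1))) (fun _ => (isCompact_segment _ _).isClosed)
    (J := {j - 1, j})
    (fun k hk => hP.vertex_notMem_edge (fun h => hk (Or.inr h)) fun h => hk (Or.inl h))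
  refine ⟨ε, hε, hsub.trans ?_⟩
  rw [biUnion_pair, sub_add_cancel, segment_symm]
  exact union_subset_union (segment_subset_halfLine _ _) (segment_subset_halfLine _ _)

theorem exists_ball_inter_polygonSet_subset_of_ne_vertex (hP : IsSimplePolygon v) {p : Pt}
    {i : ZMod n} (hi : p ∈ segment ℝ (v i) (v (i + 1))) (hv : ∀ j, p ≠ v j) :
    ∃ ε > 0, ball p ε ∩ polygonSet v ⊆
      halfLine p (v (i + 1) - v i) ∪ halfLine p (v i - v (i + 1)) := by
  have := hP.neZero
  obtain ⟨ε, hε, hsub⟩ := exists_ball_inter_iUnion_subset_biUnion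
    (F := fun k => segment ℝ (v k) (v (k + 1))) (fun _ => (isCompact_segment _ _).isClosed)
    (J := {i})
    (fun k hk hpk => by
      rcases hP.eq_vertex_of_mem_edge_of_mem_edge hi hpk hk with ⟨-, h⟩ | ⟨-, h⟩ <;>
        exact hv _ h)
  refine ⟨ε, hε, hsub.trans ?_⟩
  rw [biUnion_singleton]
  exact segment_subset_halfLine_union hi

theorem exists_ball_inter_polygonSet_hasNoRightAngle (hP : IsSimplePolygon v)
    (hA : ObtuseAngles v) {p : Pt} (hp : p ∈ polygonSet v) :
    ∃ ε > 0, HasNoRightAngle (ball p ε ∩ polygonSet v) := by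
  by_cases hv : ∃ j, p = v j
  · obtain ⟨j, rfl⟩ := hv
    obtain ⟨ε, hε, hsub⟩ := hP.exists_ball_inter_polygonSet_subset_of_vertex j
    exact ⟨ε, hε, (hasNoRightAngle_halfLine_union _ (hA j)).mono hsub⟩
  · obtain ⟨i, hi⟩ := mem_iUnion.mp hp
    obtain ⟨ε, hε, hsub⟩ :=
      hP.exists_ball_inter_polygonSet_subset_of_ne_vertex hi (not_exists.mp hv)
    have hobtuse : ⟪v (i + 1) - v i, v i - v (i + 1)⟫ < 0 := by
      rw [← neg_sub (v (i + 1)) (v i), inner_neg_right, neg_lt_zero, real_inner_self_pos,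
        sub_ne_zero]
      exact (hP.2.1 i).symm
    exact ⟨ε, hε, (hasNoRightAngle_halfLine_union _ hobtuse).mono hsub⟩

end IsSimplePolygon

/-- A simple polygon all of whose interior angles lie strictly between `π/2` and
`3π/2` has no inscribed right isosceles triangles of arbitrarily small size. -/
theorem no_small_inscribed_right_isosceles {n : ℕ} (v : ZMod n → Pt)
    (hP : IsSimplePolygon v) (hA : ObtuseAngles v) :
    ∃ ε > (0 : ℝ), ¬ ∃ y z u : Pt,
      y ∈ polygonSet v ∧ z ∈ polygonSet v ∧ u ∈ polygonSet v ∧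
      y ≠ z ∧ y ≠ u ∧ z ≠ u ∧ ‖z - y‖ < ε ∧ ‖u - y‖ < ε ∧
      ‖z - y‖ = ‖u - y‖ ∧ ⟪z - y, u - y⟫ = 0 := by
  obtain ⟨δ, hδ, hδ_noRight⟩ := hP.isCompact_polygonSet.exists_pos_forall_ball_inter
    (fun _ _ hst hT => hT.mono hst)
    fun p hp => hP.exists_ball_inter_polygonSet_hasNoRightAngle hA hp
  refine ⟨δ, hδ, ?_⟩
  rintro ⟨y, z, u, hy, hz, hu, hyz, hyu, -, hzy, huy, -, hperp⟩
  refine hδ_noRight y hy y ⟨mem_ball_self hδ, hy⟩ z ⟨?_, hz⟩ u ⟨?_, hu⟩ hyz hyu hperp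
  · rwa [mem_ball, dist_eq_norm]
  · rwa [mem_ball, dist_eq_norm]
end
end

section
/- Let P and P₁, P₂, P₃, … be nonempty compact subsets of ℝ² such that the Hausdorff distance d_H(P_k, P) tends to 0 as k → ∞, and let δ > 0. Suppose that for every k the set P_k has an inscribed square of side length at least δ. Then P has an inscribed square (of side length at least δ). -/
open scoped RealInnerProductSpace

noncomputable section

/-!
For `ε > 0`, once `d_H(Pₖ, P) ≤ ε` the vertices of the square of `Pₖ` lie in the
closed `ε`-neighbourhood `P_ε` of `P`. The square conditions with side `≥ δ` cut out a closed set
of quadruples, so its intersections with `(P_ε)⁴` form a directed family of nonempty compact sets;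
by Cantor's intersection theorem some quadruple lies in all of them, i.e. in `P⁴ = (⋂ P_ε)⁴`.
Since `δ > 0`, the limit square is nondegenerate, which forces its four vertices to be distinct.
-/

open Metric Set Filter Topology

section HausdorffLimit

variable {X : Type*} [MetricSpace X]

lemma subset_cthickening_hausdorffDist {A P : Set X} (h : hausdorffEDist A P ≠ ⊤) :
    A ⊆ cthickening (hausdorffDist A P) P := fun _ hx =>
  mem_cthickening_iff.2 <| (infEDist_le_hausdorffEDist_of_mem hx).trans_eq
    (ENNReal.ofReal_toReal h).symm

variable [ProperSpace X] {ι : Type*}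

lemma exists_forall_mem_of_forall_cthickening {P : Set X} (hP : IsCompact P)
    {S : Set (ι → X)} (hS : IsClosed S) (h : ∀ ε > 0, ∃ a ∈ S, ∀ i, a i ∈ cthickening ε P) :
    ∃ a ∈ S, ∀ i, a i ∈ P := by
  let t : Ioi (0 : ℝ) → Set (ι → X) := fun ε => S ∩ univ.pi fun _ => cthickening ε P
  have ht_mono : Monotone t := fun ε ε' hεε' =>
    inter_subset_inter_right S <| pi_mono fun _ _ => cthickening_mono hεε' P
  have ht_closed (ε) : IsClosed (t ε) :=
    hS.inter <| isClosed_set_pi fun _ _ => isClosed_cthickening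
  have ht_compact (ε) : IsCompact (t ε) :=
    (isCompact_univ_pi fun _ => hP.cthickening).inter_left hS
  obtain ⟨a, ha⟩ := IsCompact.nonempty_iInter_of_directed_nonempty_isCompact_isClosed t
    ht_mono.directed_ge
    (fun ε => let ⟨a, haS, haP⟩ := h ε ε.2; ⟨a, haS, fun i _ => haP i⟩) ht_compact ht_closed
  rw [mem_iInter] at ha
  refine ⟨a, (ha ⟨1, mem_Ioi.2 one_pos⟩).1, fun i => ?_⟩
  rw [← hP.isClosed.closure_eq, closure_eq_iInter_cthickening, mem_iInter₂]
  exact fun ε hε => (ha ⟨ε, hε⟩).2 i (mem_univ i)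

lemma exists_forall_mem_of_tendsto_hausdorffDist {κ : Type*} {l : Filter κ} [l.NeBot]
    {A : κ → Set X} {P : Set X} (hP : IsCompact P) (hfin : ∀ k, hausdorffEDist (A k) P ≠ ⊤)
    (hlim : Tendsto (fun k => hausdorffDist (A k) P) l (𝓝 0))
    {S : Set (ι → X)} (hS : IsClosed S) (hA : ∀ k, ∃ a ∈ S, ∀ i, a i ∈ A k) :
    ∃ a ∈ S, ∀ i, a i ∈ P := by
  refine exists_forall_mem_of_forall_cthickening hP hS fun ε hε => ?_
  obtain ⟨k, hk⟩ := (hlim.eventually (ge_mem_nhds hε)).exists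
  obtain ⟨a, haS, haA⟩ := hA k
  exact ⟨a, haS, fun i =>
    cthickening_mono hk P (subset_cthickening_hausdorffDist (hfin k) (haA i))⟩

end HausdorffLimit

@[fun_prop]
lemma continuous_rotCCW : Continuous rotCCW :=
  (PiLp.continuous_toLp 2 _).comp (by fun_prop)

lemma rotCCW_ne_smul {w : Pt} (hw : w ≠ 0) (c : ℝ) : rotCCW w ≠ c • w := by
  intro h
  have h₀ : -w 1 = c * w 0 := congrArg (· 0) h
  have h₁ : w 0 = c * w 1 := congrArg (· 1) h
  have hw₁ : w 1 * (1 + c ^ 2) = 0 := by linear_combination -h₀ - c * h₁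
  have hw₁ : w 1 = 0 := (mul_eq_zero.1 hw₁).resolve_right (by positivity)
  refine hw ?_
  ext i
  fin_cases i
  · simp [h₁, hw₁]
  · simp [hw₁]

/-- `a 0, a 1, a 2, a 3` play the roles of `a₁, a₂, a₃, a₄` in `InscribedSquare`. -/
def squaresOfSideGE (δ : ℝ) : Set (Fin 4 → Pt) :=
  {a | a 1 - a 0 = a 2 - a 3 ∧ a 2 - a 1 = rotCCW (a 1 - a 0) ∧ δ ≤ ‖a 1 - a 0‖}

lemma isClosed_squaresOfSideGE (δ : ℝ) : IsClosed (squaresOfSideGE δ) := by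
  simp only [squaresOfSideGE, ofPred_and]
  refine (isClosed_eq ?_ ?_).inter ((isClosed_eq ?_ ?_).inter (isClosed_le ?_ ?_)) <;> fun_prop

lemma inscribedSquare_of_sub_ne_zero {P : Set Pt} {a₁ a₂ a₃ a₄ : Pt}
    (h₁ : a₁ ∈ P) (h₂ : a₂ ∈ P) (h₃ : a₃ ∈ P) (h₄ : a₄ ∈ P)
    (hpar : a₂ - a₁ = a₃ - a₄) (hrot : a₃ - a₂ = rotCCW (a₂ - a₁)) (hv : a₂ - a₁ ≠ 0) :
    InscribedSquare P a₁ a₂ a₃ a₄ := by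
  -- each coincidence of two vertices makes `rotCCW (a₂ - a₁)` one of `0`, `a₂ - a₁`, `-(a₂ - a₁)`
  have hrot0 : a₃ - a₂ ≠ 0 := by simpa [hrot] using rotCCW_ne_smul hv 0
  refine ⟨h₁, h₂, h₃, h₄, hpar, hrot, ?_, ?_, ?_, ?_, ?_, ?_⟩ <;> rintro rfl
  · simp at hv
  · refine rotCCW_ne_smul hv (-1) ?_
    rw [← hrot]
    module
  · exact hrot0 (by rw [sub_left_injective hpar, sub_self])
  · simp at hrot0
  · refine rotCCW_ne_smul hv 1 ?_
    rw [← hrot, hpar]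
    module
  · rw [sub_self] at hpar
    exact hv hpar

theorem inscribed_square_hausdorff_limit_general (P : Set Pt) (Pk : ℕ → Set Pt)
    (hPc : IsCompact P) (hPne : P.Nonempty)
    (hkc : ∀ k, IsCompact (Pk k))
    (hconv : Filter.Tendsto (fun k => Metric.hausdorffDist (Pk k) P)
      Filter.atTop (nhds 0))
    (δ : ℝ) (hδ : 0 < δ)
    (hsq : ∀ k, ∃ a₁ a₂ a₃ a₄ : Pt,
      InscribedSquare (Pk k) a₁ a₂ a₃ a₄ ∧ δ ≤ ‖a₂ - a₁‖) :
    ∃ a₁ a₂ a₃ a₄ : Pt, InscribedSquare P a₁ a₂ a₃ a₄ ∧ δ ≤ ‖a₂ - a₁‖ := by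
  choose a₁ a₂ a₃ a₄ hk using hsq
  have hfin (k : ℕ) : hausdorffEDist (Pk k) P ≠ ⊤ :=
    hausdorffEDist_ne_top_of_nonempty_of_bounded ⟨_, (hk k).1.1⟩ hPne (hkc k).isBounded
      hPc.isBounded
  have hsquares (k : ℕ) : ∃ a ∈ squaresOfSideGE δ, ∀ i, a i ∈ Pk k := by
    obtain ⟨⟨h₁, h₂, h₃, h₄, hpar, hrot, -⟩, hside⟩ := hk k
    refine ⟨![a₁ k, a₂ k, a₃ k, a₄ k], ⟨hpar, hrot, hside⟩, fun i => ?_⟩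
    fin_cases i <;> assumption
  obtain ⟨a, ⟨hpar, hrot, hside⟩, haP⟩ :=
    exists_forall_mem_of_tendsto_hausdorffDist hPc hfin hconv (isClosed_squaresOfSideGE δ) hsquares
  have hv : a 1 - a 0 ≠ 0 := norm_pos_iff.1 (hδ.trans_le hside)
  exact ⟨a 0, a 1, a 2, a 3,
    inscribedSquare_of_sub_ne_zero (haP 0) (haP 1) (haP 2) (haP 3) hpar hrot hv, hside⟩

/-- If nonempty compact sets `Pₖ` converge to `P` in Hausdorff distance and each
`Pₖ` has an inscribed square of side length at least `δ > 0`, then `P` has an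
inscribed square of side length at least `δ`. -/
theorem inscribed_square_hausdorff_limit (P : Set Pt) (Pk : ℕ → Set Pt)
    (hPc : IsCompact P) (hPne : P.Nonempty)
    (hkc : ∀ k, IsCompact (Pk k)) (hkne : ∀ k, (Pk k).Nonempty)
    (hconv : Filter.Tendsto (fun k => Metric.hausdorffDist (Pk k) P)
      Filter.atTop (nhds 0))
    (δ : ℝ) (hδ : 0 < δ)
    (hsq : ∀ k, ∃ a₁ a₂ a₃ a₄ : Pt,
      InscribedSquare (Pk k) a₁ a₂ a₃ a₄ ∧ δ ≤ ‖a₂ - a₁‖) :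
    ∃ a₁ a₂ a₃ a₄ : Pt, InscribedSquare P a₁ a₂ a₃ a₄ ∧ δ ≤ ‖a₂ - a₁‖ :=
  inscribed_square_hausdorff_limit_general P Pk hPc hPne hkc hconv δ hδ hsq
end
end

section
/- For every simple polygon P in ℝ² and every ε > 0, there exists a simple polygon Q in ℝ² all of whose interior angles lie strictly between π/2 and 3π/2 such that the Hausdorff distance between P and Q is less than ε. -/
open scoped RealInnerProductSpace

noncomputable section

/-! Cut off every corner: on each edge mark the two points at distance `δ` from its endpoints
and replace the corner at each vertex by the chord joining the marks on its two incident
edges. The triangle cut off at a vertex is isosceles, so its base angles are acute, strictly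
so because a simple polygon never doubles back along an edge; hence all angles of the new
polygon are obtuse. Obtuse angles already force consecutive edges to meet only in their common
vertex. For small `δ` the chords lie in pairwise disjoint `δ`-balls around the vertices, away
from the non-incident edges, so the new polygon is simple, and it is `δ`-close to the old one
in Hausdorff distance. -/

open Set Filter Topology Metric

section Segments

variable {E : Type*}

theorem segment_add_smul_eq_image [AddCommGroup E] [Module ℝ E] (x u : E) {α β : ℝ}
    (h : α ≤ β) :
    segment ℝ (x + α • u) (x + β • u) = (fun s => x + s • u) '' Icc α β := by
  have hf : ⇑(AffineMap.lineMap (k := ℝ) x (x + u)) = fun s => x + s • u := by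
    ext s; simp [AffineMap.lineMap_apply_module', add_comm]
  simpa [hf, segment_eq_Icc h] using
    (image_segment ℝ (AffineMap.lineMap x (x + u)) α β).symm

theorem dist_add_smul_add_smul [NormedAddCommGroup E] [NormedSpace ℝ E] (x : E) {u : E}
    (hu : ‖u‖ = 1) (s t : ℝ) :
    dist (x + s • u) (x + t • u) = |s - t| := by
  rw [dist_add_left, dist_eq_norm, ← sub_smul, norm_smul, hu, mul_one, Real.norm_eq_abs]

theorem segment_inter_segment_eq_singleton_of_inner_neg [NormedAddCommGroup E]
    [InnerProductSpace ℝ E] {x y z : E} (h : ⟪x - y, z - y⟫ < 0) :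
    segment ℝ x y ∩ segment ℝ y z = {y} := by
  refine subset_antisymm ?_
    (singleton_subset_iff.2 ⟨right_mem_segment _ _ _, left_mem_segment _ _ _⟩)
  rintro w ⟨hwx, hwz⟩
  rw [segment_symm, segment_eq_image'] at hwx
  rw [segment_eq_image'] at hwz
  obtain ⟨s, ⟨hs0, -⟩, rfl⟩ := hwx
  obtain ⟨t, ⟨ht0, -⟩, hst⟩ := hwz
  have hxy : x - y ≠ 0 := fun h0 => by simp [h0] at h
  have hinner : s * ‖x - y‖ ^ 2 = t * ⟪x - y, z - y⟫ := by
    rw [← real_inner_self_eq_norm_sq, ← real_inner_smul_left, ← add_left_cancel hst,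
      real_inner_smul_left, real_inner_comm]
  have hs : s = 0 := by
    have hpos := pow_pos (norm_pos_iff.2 hxy) 2
    nlinarith [mul_nonpos_of_nonneg_of_nonpos ht0 h.le]
  simp [hs]

theorem inner_add_pos_of_norm_eq_one [NormedAddCommGroup E] [InnerProductSpace ℝ E]
    {u₁ u₂ : E} (hu₁ : ‖u₁‖ = 1) (hu₂ : ‖u₂‖ = 1) (h : u₁ + u₂ ≠ 0) :
    0 < ⟪u₁, u₁ + u₂⟫ := by
  have hsq : ‖u₁ + u₂‖ ^ 2 = 2 * ⟪u₁, u₁ + u₂⟫ := by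
    rw [norm_add_sq_real, inner_add_right, real_inner_self_eq_norm_sq, hu₁, hu₂]; ring
  have := norm_pos_iff.2 h
  nlinarith

theorem ne_of_segment_inter_eq_singleton [AddCommGroup E] [Module ℝ E] {b e₁ e₂ : E}
    {s t : ℝ} (hs : 0 < s) (ht : 0 < t) (he : e₁ ≠ 0)
    (h : segment ℝ (b + s • e₁) b ∩ segment ℝ b (b + t • e₂) = {b}) : e₁ ≠ e₂ := by
  rintro rfl
  have hseg : ∀ {r : ℝ}, 0 ≤ r → segment ℝ b (b + r • e₁) = (fun c => b + c • e₁) '' Icc 0 r :=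
    fun hr => by simpa using segment_add_smul_eq_image b e₁ hr
  have hr : 0 < min s t := lt_min hs ht
  have hmem :
      b + min s t • e₁ ∈ segment ℝ (b + s • e₁) b ∩ segment ℝ b (b + t • e₁) := by
    rw [segment_symm, hseg hs.le, hseg ht.le]
    exact ⟨⟨_, ⟨hr.le, min_le_left _ _⟩, rfl⟩,
      ⟨_, ⟨hr.le, min_le_right _ _⟩, rfl⟩⟩
  rw [h, mem_singleton_iff, add_eq_left, smul_eq_zero] at hmem
  exact hmem.elim hr.ne' he

end Segments

section Interleave

variable {n : ℕ} [NeZero n] {α : Type*}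

def evenIndex (a : ZMod n) : ZMod (2 * n) := ((2 * a.val : ℕ) : ZMod (2 * n))

/-- The cyclic sequence `p 0, q 0, p 1, q 1, …, p (n - 1), q (n - 1)`. -/
def interleave (p q : ZMod n → α) (k : ZMod (2 * n)) : α :=
  if Even k.val then p (k.val / 2 : ℕ) else q (k.val / 2 : ℕ)

theorem val_evenIndex (a : ZMod n) : (evenIndex a).val = 2 * a.val := by
  rw [evenIndex, ZMod.val_natCast, Nat.mod_eq_of_lt (by have := a.val_lt; omega)]

theorem val_evenIndex_add_one (a : ZMod n) : (evenIndex a + 1).val = 2 * a.val + 1 := by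
  rw [evenIndex, ← Nat.cast_add_one, ZMod.val_natCast,
    Nat.mod_eq_of_lt (by have := a.val_lt; omega)]

@[simp] theorem evenIndex_add_one_add_one (a : ZMod n) :
    evenIndex a + 1 + 1 = evenIndex (a + 1) := by
  have hval : (a + 1).val = (a.val + 1) % n := by
    rw [← ZMod.val_natCast, Nat.cast_add_one, ZMod.natCast_zmod_val]
  rw [evenIndex, evenIndex, hval, add_assoc, one_add_one_eq_two,
    show ((2 * a.val : ℕ) : ZMod (2 * n)) + 2 = ((2 * (a.val + 1) : ℕ) : ZMod (2 * n)) by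
      push_cast; ring,
    ZMod.natCast_eq_natCast_iff', Nat.mul_mod_mul_left, Nat.mul_mod_mul_left, Nat.mod_mod]

theorem evenIndex_sub_one (a : ZMod n) : evenIndex a - 1 = evenIndex (a - 1) + 1 := by
  rw [sub_eq_iff_eq_add, evenIndex_add_one_add_one, sub_add_cancel]

theorem exists_eq_evenIndex (k : ZMod (2 * n)) :
    ∃ a, k = evenIndex a ∨ k = evenIndex a + 1 := by
  have hk := k.val_lt
  refine ⟨(k.val / 2 : ℕ), ?_⟩
  have hv : ((k.val / 2 : ℕ) : ZMod n).val = k.val / 2 := ZMod.val_cast_of_lt (by omega)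
  rcases Nat.even_or_odd' k.val with ⟨m, hm | hm⟩
  · left; apply ZMod.val_injective; rw [val_evenIndex, hv]; omega
  · right; apply ZMod.val_injective; rw [val_evenIndex_add_one, hv]; omega

@[simp] theorem interleave_evenIndex (p q : ZMod n → α) (a : ZMod n) :
    interleave p q (evenIndex a) = p a := by
  simp [interleave, val_evenIndex]

@[simp] theorem interleave_evenIndex_add_one (p q : ZMod n → α) (a : ZMod n) :
    interleave p q (evenIndex a + 1) = q a := by
  simp [interleave, val_evenIndex_add_one, show (2 * a.val + 1) / 2 = a.val by omega]

end Interleave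

section Polygon

variable {n : ℕ}

theorem ObtuseAngles.ne_add_one {w : ZMod n → Pt} (h : ObtuseAngles w) (i : ZMod n) :
    w i ≠ w (i + 1) := by
  intro heq
  simpa [heq] using h (i + 1)

theorem ObtuseAngles.segment_inter_segment {w : ZMod n → Pt} (h : ObtuseAngles w)
    (i : ZMod n) :
    segment ℝ (w i) (w (i + 1)) ∩ segment ℝ (w (i + 1)) (w (i + 2)) = {w (i + 1)} := by
  apply segment_inter_segment_eq_singleton_of_inner_neg
  simpa [add_assoc, one_add_one_eq_two] using h (i + 1)

theorem IsSimplePolygon.of_obtuseAngles {w : ZMod n → Pt} (hn : 3 ≤ n) (h : ObtuseAngles w)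
    (hdisj : ∀ i j : ZMod n, i ≠ j → i ≠ j + 1 → j ≠ i + 1 →
      segment ℝ (w i) (w (i + 1)) ∩ segment ℝ (w j) (w (j + 1)) = ∅) :
    IsSimplePolygon w :=
  ⟨hn, h.ne_add_one, h.segment_inter_segment, hdisj⟩

variable {v : ZMod n → Pt}

theorem IsSimplePolygon.notMem_segment (hP : IsSimplePolygon v) {i j : ZMod n} (h₁ : j ≠ i)
    (h₂ : j ≠ i + 1) : v j ∉ segment ℝ (v i) (v (i + 1)) := by
  obtain ⟨-, hne, hcons, hdisj⟩ := hP
  intro hj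
  rcases eq_or_ne i (j + 1) with rfl | h₃
  · have hmem : v j ∈ segment ℝ (v j) (v (j + 1)) ∩ segment ℝ (v (j + 1)) (v (j + 2)) :=
      ⟨left_mem_segment _ _ _, by simpa [add_assoc, one_add_one_eq_two] using hj⟩
    exact hne j (by simpa [hcons j] using hmem)
  · have hmem : v j ∈ segment ℝ (v i) (v (i + 1)) ∩ segment ℝ (v j) (v (j + 1)) :=
      ⟨hj, left_mem_segment _ _ _⟩
    simp [hdisj i j h₁.symm h₃ h₂] at hmem

theorem IsSimplePolygon.injective (hP : IsSimplePolygon v) : Function.Injective v := by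
  intro i j hij
  by_contra h
  rcases eq_or_ne j (i + 1) with rfl | h'
  · exact hP.2.1 i hij
  · exact hP.notMem_segment (Ne.symm h) h' (hij ▸ left_mem_segment _ _ _)

def edgeDir (v : ZMod n → Pt) (i : ZMod n) : Pt :=
  ‖v (i + 1) - v i‖⁻¹ • (v (i + 1) - v i)

theorem IsSimplePolygon.norm_edgeDir (hP : IsSimplePolygon v) (i : ZMod n) :
    ‖edgeDir v i‖ = 1 := by
  rw [edgeDir, norm_smul, norm_inv, norm_norm,
    inv_mul_cancel₀ (norm_ne_zero_iff.2 (sub_ne_zero.2 (hP.2.1 i).symm))]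

theorem add_norm_smul_edgeDir (v : ZMod n → Pt) (i : ZMod n) :
    v i + ‖v (i + 1) - v i‖ • edgeDir v i = v (i + 1) := by
  rcases eq_or_ne (v (i + 1) - v i) 0 with h | h
  · rw [h, norm_zero, zero_smul, add_zero, ← sub_eq_zero.1 h]
  · rw [edgeDir, smul_inv_smul₀ (norm_ne_zero_iff.2 h), add_sub_cancel]

theorem segment_eq_image_edgeDir (v : ZMod n → Pt) (i : ZMod n) :
    segment ℝ (v i) (v (i + 1)) =
      (fun s => v i + s • edgeDir v i) '' Icc 0 ‖v (i + 1) - v i‖ := by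
  rw [← segment_add_smul_eq_image _ _ (norm_nonneg _), add_norm_smul_edgeDir, zero_smul,
    add_zero]

theorem IsSimplePolygon.edgeDir_add_edgeDir_ne_zero (hP : IsSimplePolygon v) (i : ZMod n) :
    edgeDir v i + edgeDir v (i + 1) ≠ 0 := by
  have hback : v (i + 1) + ‖v (i + 1) - v i‖ • -edgeDir v i = v i := by
    rw [smul_neg, ← sub_eq_add_neg, sub_eq_iff_eq_add, add_norm_smul_edgeDir]
  rw [Ne, ← neg_eq_iff_add_eq_zero]
  refine ne_of_segment_inter_eq_singleton (b := v (i + 1))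
    (norm_pos_iff.2 (sub_ne_zero.2 (hP.2.1 i).symm))
    (norm_pos_iff.2 (sub_ne_zero.2 (hP.2.1 (i + 1)).symm))
    (neg_ne_zero.2 (norm_ne_zero_iff.1 (by simp [hP.norm_edgeDir]))) ?_
  rw [hback, add_norm_smul_edgeDir, add_assoc, one_add_one_eq_two]
  exact hP.2.2.1 i

end Polygon

section CornerCut

variable {n : ℕ} {v : ZMod n → Pt} {δ : ℝ}

/-- The chords cutting off the corners of `v` at distance `δ` lie in the closed `δ`-balls
around the vertices; these conditions keep the balls apart from each other and from the
edges not incident to their centres. -/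
structure IsCutRadius (v : ZMod n → Pt) (δ : ℝ) : Prop where
  pos : 0 < δ
  two_mul_lt_dist : ∀ i j, i ≠ j → 2 * δ < dist (v i) (v j)
  lt_infDist :
    ∀ i j, j ≠ i → j ≠ i + 1 → δ < infDist (v j) (segment ℝ (v i) (v (i + 1)))

theorem IsSimplePolygon.eventually_isCutRadius [NeZero n] (hP : IsSimplePolygon v) :
    ∀ᶠ δ in 𝓝[>] 0, IsCutRadius v δ := by
  have small : ∀ {c : ℝ}, 0 < c → ∀ᶠ δ in 𝓝[>] (0 : ℝ), 2 * δ < c := fun hc => by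
    filter_upwards [Ioo_mem_nhdsGT (half_pos hc)] with δ hδ
    linarith [hδ.2]
  have hdist : ∀ᶠ δ in 𝓝[>] (0 : ℝ), ∀ i j, i ≠ j → 2 * δ < dist (v i) (v j) :=
    eventually_all.2 fun i => eventually_all.2 fun j => eventually_imp_distrib_left.2
      fun hij => small (dist_pos.2 (hP.injective.ne hij))
  have hinf : ∀ᶠ δ in 𝓝[>] (0 : ℝ), ∀ i j, j ≠ i → j ≠ i + 1 →
      2 * δ < infDist (v j) (segment ℝ (v i) (v (i + 1))) :=
    eventually_all.2 fun i => eventually_all.2 fun j => eventually_imp_distrib_left.2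
      fun h₁ => eventually_imp_distrib_left.2 fun h₂ => small <|
        ((convexHull_pair (𝕜 := ℝ) (v i) (v (i + 1)) ▸
          (toFinite _).isCompact_convexHull ℝ).isClosed.notMem_iff_infDist_pos
          ⟨_, left_mem_segment _ _ _⟩).1 (hP.notMem_segment h₁ h₂)
  filter_upwards [self_mem_nhdsWithin, hdist, hinf] with δ (hδ : 0 < δ) hdist hinf
  exact ⟨hδ, hdist, fun i j h₁ h₂ => by linarith [hinf i j h₁ h₂]⟩

theorem IsCutRadius.two_mul_lt_norm (hP : IsSimplePolygon v) (hδ : IsCutRadius v δ)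
    (i : ZMod n) : 2 * δ < ‖v (i + 1) - v i‖ := by
  rw [← dist_eq_norm]
  exact hδ.two_mul_lt_dist _ _ fun h => hP.2.1 i (congrArg v h.symm)

def cutStart (v : ZMod n → Pt) (δ : ℝ) (i : ZMod n) : Pt := v i + δ • edgeDir v i

def cutEnd (v : ZMod n → Pt) (δ : ℝ) (i : ZMod n) : Pt := v (i + 1) - δ • edgeDir v i

def cornerCut (v : ZMod n → Pt) (δ : ℝ) : ZMod (2 * n) → Pt :=
  interleave (cutStart v δ) (cutEnd v δ)

theorem cutEnd_eq (v : ZMod n → Pt) (δ : ℝ) (i : ZMod n) :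
    cutEnd v δ i = v i + (‖v (i + 1) - v i‖ - δ) • edgeDir v i := by
  rw [cutEnd, sub_smul, ← add_sub_assoc, add_norm_smul_edgeDir]

theorem segment_cutStart_cutEnd_eq_image (hP : IsSimplePolygon v) (hδ : IsCutRadius v δ)
    (i : ZMod n) : segment ℝ (cutStart v δ i) (cutEnd v δ i) =
      (fun s => v i + s • edgeDir v i) '' Icc δ (‖v (i + 1) - v i‖ - δ) := by
  rw [cutStart, cutEnd_eq]
  exact segment_add_smul_eq_image _ _ (by linarith [hδ.two_mul_lt_norm hP i])

theorem segment_cutStart_cutEnd_subset (hP : IsSimplePolygon v) (hδ : IsCutRadius v δ)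
    (i : ZMod n) :
    segment ℝ (cutStart v δ i) (cutEnd v δ i) ⊆ segment ℝ (v i) (v (i + 1)) := by
  rw [segment_cutStart_cutEnd_eq_image hP hδ, segment_eq_image_edgeDir]
  exact image_mono (Icc_subset_Icc hδ.pos.le (by linarith [hδ.pos]))

theorem notMem_segment_cutStart_cutEnd (hP : IsSimplePolygon v) (hδ : IsCutRadius v δ)
    (i : ZMod n) : v i ∉ segment ℝ (cutStart v δ i) (cutEnd v δ i) := by
  rw [segment_cutStart_cutEnd_eq_image hP hδ]
  rintro ⟨s, hs, hvs⟩
  simp only [add_eq_left, smul_eq_zero] at hvs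
  exact hvs.elim (fun h => by linarith [hs.1, hδ.pos])
    fun h => by simpa [h] using hP.norm_edgeDir i

theorem segment_cutEnd_cutStart_subset (hP : IsSimplePolygon v) (hδ : IsCutRadius v δ)
    (i : ZMod n) :
    segment ℝ (cutEnd v δ i) (cutStart v δ (i + 1)) ⊆ closedBall (v (i + 1)) δ := by
  refine (convex_closedBall _ _).segment_subset ?_ ?_ <;>
    simp [cutEnd, cutStart, norm_smul, hP.norm_edgeDir, abs_of_pos hδ.pos]

theorem exists_mem_segment_cutStart_cutEnd_dist_le (hP : IsSimplePolygon v)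
    (hδ : IsCutRadius v δ) {i : ZMod n} {x : Pt} (hx : x ∈ segment ℝ (v i) (v (i + 1))) :
    ∃ y ∈ segment ℝ (cutStart v δ i) (cutEnd v δ i), dist x y ≤ δ := by
  rw [segment_eq_image_edgeDir] at hx
  obtain ⟨s, ⟨hs₀, hsL⟩, rfl⟩ := hx
  have hL := hδ.two_mul_lt_norm hP i
  -- `s` clamped to `[δ, ‖v (i + 1) - v i‖ - δ]`
  set t := max δ (min s (‖v (i + 1) - v i‖ - δ))
  refine ⟨v i + t • edgeDir v i, ?_, ?_⟩
  · rw [segment_cutStart_cutEnd_eq_image hP hδ]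
    exact ⟨t, ⟨le_max_left _ _, max_le (by linarith) (min_le_right _ _)⟩, rfl⟩
  · rw [dist_add_smul_add_smul _ (hP.norm_edgeDir i), abs_le]
    constructor <;> simp only [t, max_def, min_def] <;> split_ifs <;> linarith [hδ.pos]

theorem inner_cutStart_sub_cutEnd_neg (hP : IsSimplePolygon v) (hδ : IsCutRadius v δ)
    (i : ZMod n) :
    ⟪cutStart v δ i - cutEnd v δ i, cutStart v δ (i + 1) - cutEnd v δ i⟫ < 0 := by
  have h₁ : cutStart v δ i - cutEnd v δ i =
      -((‖v (i + 1) - v i‖ - 2 * δ) • edgeDir v i) := by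
    rw [cutStart, cutEnd_eq]; module
  have h₂ : cutStart v δ (i + 1) - cutEnd v δ i = δ • (edgeDir v i + edgeDir v (i + 1)) := by
    rw [cutStart, cutEnd]; module
  have hturn := inner_add_pos_of_norm_eq_one (hP.norm_edgeDir i) (hP.norm_edgeDir (i + 1))
    (hP.edgeDir_add_edgeDir_ne_zero i)
  rw [h₁, h₂, inner_neg_left, real_inner_smul_left, real_inner_smul_right, neg_neg_iff_pos]
  exact mul_pos (by linarith [hδ.two_mul_lt_norm hP i]) (mul_pos hδ.pos hturn)

theorem inner_cutEnd_sub_cutStart_neg (hP : IsSimplePolygon v) (hδ : IsCutRadius v δ)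
    (i : ZMod n) :
    ⟪cutEnd v δ (i - 1) - cutStart v δ i, cutEnd v δ i - cutStart v δ i⟫ < 0 := by
  have h₁ : cutEnd v δ (i - 1) - cutStart v δ i =
      -(δ • (edgeDir v i + edgeDir v (i - 1))) := by
    rw [cutEnd, cutStart, sub_add_cancel]; module
  have h₂ : cutEnd v δ i - cutStart v δ i =
      (‖v (i + 1) - v i‖ - 2 * δ) • edgeDir v i := by
    rw [cutStart, cutEnd_eq]; module
  have hturn := inner_add_pos_of_norm_eq_one (hP.norm_edgeDir i) (hP.norm_edgeDir (i - 1))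
    (by simpa [add_comm] using hP.edgeDir_add_edgeDir_ne_zero (i - 1))
  rw [h₁, h₂, inner_neg_left, real_inner_smul_left, real_inner_smul_right, real_inner_comm,
    neg_neg_iff_pos]
  exact mul_pos hδ.pos (mul_pos (by linarith [hδ.two_mul_lt_norm hP i]) hturn)

theorem disjoint_segment_cutStart_cutEnd (hP : IsSimplePolygon v) (hδ : IsCutRadius v δ)
    {i j : ZMod n} (hij : i ≠ j) :
    Disjoint (segment ℝ (cutStart v δ i) (cutEnd v δ i))
      (segment ℝ (cutStart v δ j) (cutEnd v δ j)) := by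
  have hadj : ∀ i, Disjoint (segment ℝ (cutStart v δ i) (cutEnd v δ i))
      (segment ℝ (cutStart v δ (i + 1)) (cutEnd v δ (i + 1))) := fun i => by
    refine disjoint_left.2 fun x hx hx' => notMem_segment_cutStart_cutEnd hP hδ (i + 1) ?_
    have hx'' : x ∈ segment ℝ (v i) (v (i + 1)) ∩ segment ℝ (v (i + 1)) (v (i + 2)) :=
      ⟨segment_cutStart_cutEnd_subset hP hδ i hx, by
        simpa [add_assoc, one_add_one_eq_two] using segment_cutStart_cutEnd_subset hP hδ _ hx'⟩
    rw [hP.2.2.1 i] at hx''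
    rwa [← mem_singleton_iff.1 hx'']
  rcases eq_or_ne j (i + 1) with rfl | h₁
  · exact hadj i
  rcases eq_or_ne i (j + 1) with rfl | h₂
  · exact (hadj j).symm
  exact (disjoint_iff_inter_eq_empty.2 (hP.2.2.2 i j hij h₂ h₁)).mono
    (segment_cutStart_cutEnd_subset hP hδ i) (segment_cutStart_cutEnd_subset hP hδ j)

theorem disjoint_segment_cutEnd_cutStart (hP : IsSimplePolygon v) (hδ : IsCutRadius v δ)
    {i j : ZMod n} (hij : i ≠ j) :
    Disjoint (segment ℝ (cutEnd v δ i) (cutStart v δ (i + 1)))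
      (segment ℝ (cutEnd v δ j) (cutStart v δ (j + 1))) := by
  refine disjoint_left.2 fun x hx hx' => ?_
  have h₁ := mem_closedBall'.1 (segment_cutEnd_cutStart_subset hP hδ i hx)
  have h₂ := mem_closedBall.1 (segment_cutEnd_cutStart_subset hP hδ j hx')
  have := hδ.two_mul_lt_dist (i + 1) (j + 1) (by simpa using hij)
  linarith [dist_triangle (v (i + 1)) x (v (j + 1))]

theorem disjoint_segment_cutStart_cutEnd_cutStart (hP : IsSimplePolygon v)
    (hδ : IsCutRadius v δ) {i j : ZMod n} (h₁ : j ≠ i) (h₂ : j + 1 ≠ i) :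
    Disjoint (segment ℝ (cutStart v δ i) (cutEnd v δ i))
      (segment ℝ (cutEnd v δ j) (cutStart v δ (j + 1))) := by
  refine disjoint_left.2 fun x hx hx' => ?_
  have hfar := hδ.lt_infDist i (j + 1) h₂ (by simpa using h₁)
  have hnear := mem_closedBall'.1 (segment_cutEnd_cutStart_subset hP hδ j hx')
  linarith [infDist_le_dist_of_mem (x := v (j + 1)) (segment_cutStart_cutEnd_subset hP hδ i hx)]

variable [NeZero n]

@[simp] theorem cornerCut_evenIndex (v : ZMod n → Pt) (δ : ℝ) (i : ZMod n) :
    cornerCut v δ (evenIndex i) = cutStart v δ i :=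
  interleave_evenIndex _ _ _

@[simp] theorem cornerCut_evenIndex_add_one (v : ZMod n → Pt) (δ : ℝ) (i : ZMod n) :
    cornerCut v δ (evenIndex i + 1) = cutEnd v δ i :=
  interleave_evenIndex_add_one _ _ _

theorem obtuseAngles_cornerCut (hP : IsSimplePolygon v) (hδ : IsCutRadius v δ) :
    ObtuseAngles (cornerCut v δ) := by
  intro k
  obtain ⟨i, rfl | rfl⟩ := exists_eq_evenIndex k
  · simpa [evenIndex_sub_one] using inner_cutEnd_sub_cutStart_neg hP hδ i
  · simpa using inner_cutStart_sub_cutEnd_neg hP hδ i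

theorem isSimplePolygon_cornerCut (hP : IsSimplePolygon v) (hδ : IsCutRadius v δ) :
    IsSimplePolygon (cornerCut v δ) := by
  refine .of_obtuseAngles (by linarith [hP.1]) (obtuseAngles_cornerCut hP hδ)
    fun k l hkl h₁ h₂ => disjoint_iff_inter_eq_empty.1 ?_
  obtain ⟨i, rfl | rfl⟩ := exists_eq_evenIndex k <;>
    obtain ⟨j, rfl | rfl⟩ := exists_eq_evenIndex l <;>
    simp only [cornerCut_evenIndex, cornerCut_evenIndex_add_one, evenIndex_add_one_add_one] at *
  · exact disjoint_segment_cutStart_cutEnd hP hδ fun h => hkl (by rw [h])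
  · exact disjoint_segment_cutStart_cutEnd_cutStart hP hδ (fun h => h₂ (by rw [h]))
      fun h => h₁ (by rw [h])
  · exact (disjoint_segment_cutStart_cutEnd_cutStart hP hδ (fun h => h₁ (by rw [h]))
      fun h => h₂ (by rw [h])).symm
  · exact disjoint_segment_cutEnd_cutStart hP hδ fun h => hkl (by rw [h])

theorem mem_polygonSet_cornerCut {x : Pt} :
    x ∈ polygonSet (cornerCut v δ) ↔
      ∃ i, x ∈ segment ℝ (cutStart v δ i) (cutEnd v δ i) ∨
        x ∈ segment ℝ (cutEnd v δ i) (cutStart v δ (i + 1)) := by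
  simp only [polygonSet, mem_iUnion]
  constructor
  · rintro ⟨k, hk⟩
    obtain ⟨i, rfl | rfl⟩ := exists_eq_evenIndex k
    · exact ⟨i, .inl (by simpa using hk)⟩
    · exact ⟨i, .inr (by simpa using hk)⟩
  · rintro ⟨i, hi | hi⟩
    · exact ⟨evenIndex i, by simpa using hi⟩
    · exact ⟨evenIndex i + 1, by simpa using hi⟩

theorem hausdorffDist_cornerCut_le (hP : IsSimplePolygon v) (hδ : IsCutRadius v δ) :
    hausdorffDist (polygonSet v) (polygonSet (cornerCut v δ)) ≤ δ := by
  refine hausdorffDist_le_of_mem_dist hδ.pos.le (fun x hx => ?_) fun y hy => ?_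
  · obtain ⟨i, hi⟩ := mem_iUnion.1 hx
    obtain ⟨y, hy, hxy⟩ := exists_mem_segment_cutStart_cutEnd_dist_le hP hδ hi
    exact ⟨y, mem_polygonSet_cornerCut.2 ⟨i, .inl hy⟩, hxy⟩
  · obtain ⟨i, hi | hi⟩ := mem_polygonSet_cornerCut.1 hy
    · exact ⟨y, mem_iUnion.2 ⟨i, segment_cutStart_cutEnd_subset hP hδ i hi⟩,
        (dist_self y).trans_le hδ.pos.le⟩
    · exact ⟨v (i + 1), mem_iUnion.2 ⟨i, right_mem_segment _ _ _⟩,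
        segment_cutEnd_cutStart_subset hP hδ i hi⟩

end CornerCut

/-- Every simple polygon can be approximated arbitrarily well in Hausdorff distance
by a simple polygon all of whose interior angles lie strictly between `π/2` and
`3π/2`. -/
theorem approx_by_obtuse_polygon {n : ℕ} (v : ZMod n → Pt)
    (hP : IsSimplePolygon v) (ε : ℝ) (hε : 0 < ε) :
    ∃ (m : ℕ) (w : ZMod m → Pt), IsSimplePolygon w ∧ ObtuseAngles w ∧
      Metric.hausdorffDist (polygonSet v) (polygonSet w) < ε := by
  have : NeZero n := ⟨by linarith [hP.1]⟩
  obtain ⟨δ, hδ, -, hδε⟩ := (hP.eventually_isCutRadius.and (Ioo_mem_nhdsGT hε)).exists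
  exact ⟨2 * n, cornerCut v δ, isSimplePolygon_cornerCut hP hδ, obtuseAngles_cornerCut hP hδ,
    (hausdorffDist_cornerCut_le hP hδ).trans_lt hδε⟩
end
end
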